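/- arXiv:1203.2939 — 5 statements merged into one kernel-verified Lean document; each statement's English description precedes it below -/
import Mathlib

section
/- Let G be a Gauss diagram and let G' be obtained from G by a single chord move, i.e. by inserting a new chord whose two endpoints occupy adjacent positions on the circle (so that the new chord intersects no other chord). Then for every chord c of G, the parity of c computed in G' equals the parity of c computed in G. -/
/-! ## Gauss diagrams and parity -/

/-- `arc a b p` : position `p` lies strictly inside the arc traversed in the positive
direction from `a` to `b` on a circle whose positions are numbered `0, 1, 2, …`
in the positive direction. -/
def arc (a b p : ℕ) : Bool :=
  if a < b then decide (a < p ∧ p < b) else decide (p < b ∨ a < p)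

/-- A Gauss diagram: `n` signed oriented chords whose `2n` endpoints are placed on the
`2n` points of an oriented circle.  Chord `i` has its head (arrowhead) at position
`head i`, its foot at position `foot i`, and sign `sign i`. -/
structure GaussDiagram where
  n : ℕ
  head : Fin n → Fin (2 * n)
  foot : Fin n → Fin (2 * n)
  sign : Fin n → ℤ

namespace GaussDiagram

/-- A genuine Gauss diagram: all `2n` endpoints are distinct (hence they exhaust the
`2n` circle positions) and every sign is `±1`. -/
def Proper (G : GaussDiagram) : Prop :=
  Function.Injective (Sum.elim G.head G.foot) ∧ ∀ i, G.sign i = 1 ∨ G.sign i = -1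

/-- `G.crosses c x` : chord `x` intersects chord `c` (their endpoint pairs interleave
in the cyclic order), i.e. `x ∈ N_c`. -/
def crosses (G : GaussDiagram) (c x : Fin G.n) : Bool :=
  x != c &&
    (arc (G.head c).1 (G.foot c).1 (G.head x).1 != arc (G.head c).1 (G.foot c).1 (G.foot x).1)

/-- The intersection number `int_c(x)`: `+1` if the head of `x` lies on the arc traversed
in the positive direction from the head of `c` to the foot of `c`, and `-1` otherwise. -/
def inter (G : GaussDiagram) (c x : Fin G.n) : ℤ :=
  if arc (G.head c).1 (G.foot c).1 (G.head x).1 then 1 else -1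

/-- The parity of a chord: `p(c) = ∑_{x ∈ N_c} sgn(x) · int_c(x)`. -/
def parity (G : GaussDiagram) (c : Fin G.n) : ℤ :=
  ∑ x : Fin G.n, if G.crosses c x then G.sign x * G.inter c x else 0

end GaussDiagram

/-- The cyclic successor of a circle position. -/
def psucc {m : ℕ} (v : Fin m) : Fin m := ⟨(v.1 + 1) % m, Nat.mod_lt _ v.pos⟩

/-- Two circle positions are adjacent. -/
def adjPos {m : ℕ} (u v : Fin m) : Prop := v = psucc u ∨ u = psucc v

/-- A map of circle positions preserving the cyclic order (in particular injective). -/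
def CyclicMap {k l : ℕ} (φ : Fin k → Fin l) : Prop :=
  ∀ a b p : Fin k, arc a.1 b.1 p.1 = arc (φ a).1 (φ b).1 (φ p).1

/-- A map of circle positions reversing the cyclic order. -/
def AntiCyclicMap {k l : ℕ} (φ : Fin k → Fin l) : Prop :=
  ∀ a b p : Fin k, arc a.1 b.1 p.1 = arc (φ b).1 (φ a).1 (φ p).1

/-! ## The chord moves -/

/-- The single chord move: `G'` is obtained from `G` by inserting one chord `y` whose two
endpoints occupy adjacent positions on the circle; all old chords keep their mutual cyclic
position (via the cyclic-order preserving map `φ`), their orientation and their sign. -/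
def SingleChordMove (G G' : GaussDiagram) : Prop :=
  G.Proper ∧ G'.Proper ∧ G'.n = G.n + 1 ∧
  ∃ (e : Fin G.n → Fin G'.n) (φ : Fin (2 * G.n) → Fin (2 * G'.n)) (y : Fin G'.n),
    Function.Injective e ∧ (∀ i, e i ≠ y) ∧ CyclicMap φ ∧
    (∀ i, G'.head (e i) = φ (G.head i) ∧ G'.foot (e i) = φ (G.foot i) ∧
      G'.sign (e i) = G.sign i) ∧
    adjPos (G'.head y) (G'.foot y)

/-- The two chord move: `G'` is obtained from `G` by inserting a pair of oppositely signed
chords `y₁, y₂` whose heads occupy adjacent positions and whose feet occupy adjacent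
positions on the circle. -/
def TwoChordMove (G G' : GaussDiagram) : Prop :=
  G.Proper ∧ G'.Proper ∧ G'.n = G.n + 2 ∧
  ∃ (e : Fin G.n → Fin G'.n) (φ : Fin (2 * G.n) → Fin (2 * G'.n)) (y₁ y₂ : Fin G'.n),
    Function.Injective e ∧ y₁ ≠ y₂ ∧ (∀ i, e i ≠ y₁ ∧ e i ≠ y₂) ∧ CyclicMap φ ∧
    (∀ i, G'.head (e i) = φ (G.head i) ∧ G'.foot (e i) = φ (G.foot i) ∧
      G'.sign (e i) = G.sign i) ∧
    adjPos (G'.head y₁) (G'.head y₂) ∧ adjPos (G'.foot y₁) (G'.foot y₂) ∧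
    G'.sign y₁ = -G'.sign y₂

/-- The triangle (vertex) structure of three chords `x y z` of `G`: their six endpoints
form three pairs of adjacent circle positions (the vertices of a triangle), namely
`{w₁, w₁+1}` (two heads), `{w₂, w₂+1}` (two feet) and `{w₃, w₃+1}` (a head and a foot).
Chord `x` runs from the head–head vertex to the foot–foot vertex. -/
def TriangleVertices (G : GaussDiagram) (x y z : Fin G.n) (w₁ w₂ w₃ : Fin (2 * G.n)) : Prop :=
  x ≠ y ∧ y ≠ z ∧ x ≠ z ∧
  ((G.head x = w₁ ∧ G.head y = psucc w₁) ∨ (G.head x = psucc w₁ ∧ G.head y = w₁)) ∧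
  ((G.foot x = w₂ ∧ G.foot z = psucc w₂) ∨ (G.foot x = psucc w₂ ∧ G.foot z = w₂)) ∧
  ((G.foot y = w₃ ∧ G.head z = psucc w₃) ∨ (G.foot y = psucc w₃ ∧ G.head z = w₃))

/-- The admissible sign configurations for a triangle move on the chords `x y z`
(`x` being the chord joining the head–head vertex to the foot–foot vertex):
these are the configurations exhibited in the paper together with their modifications
obtained by simultaneously reversing the sign and orientation of the two chords meeting
at the head–head vertex or at the foot–foot vertex.
In the (3,0) case the two chords `y, z` carry one sign and `x` the opposite sign; in the
(2,1) case the signs are governed by the pair of chords crossing on the one-intersection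
side of the move. -/
def AdmissibleSigns (G G' : GaussDiagram) (x y z : Fin G.n) (x' y' z' : Fin G'.n) : Prop :=
  -- (3,0) triangle move
  (((G.crosses x y = false ∧ G.crosses y z = false ∧ G.crosses x z = false) ∨
    (G'.crosses x' y' = false ∧ G'.crosses y' z' = false ∧ G'.crosses x' z' = false)) ∧
    G.sign y = G.sign z ∧ G.sign x = -G.sign y) ∨
  -- (2,1) triangle move, the single intersection being between x and y
  (((G.crosses x y = true ∧ G.crosses y z = false ∧ G.crosses x z = false) ∨
    (G'.crosses x' y' = true ∧ G'.crosses y' z' = false ∧ G'.crosses x' z' = false)) ∧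
    G.sign y = -G.sign x ∧ G.sign z = G.sign x) ∨
  -- (2,1) triangle move, the single intersection being between x and z
  (((G.crosses x z = true ∧ G.crosses x y = false ∧ G.crosses y z = false) ∨
    (G'.crosses x' z' = true ∧ G'.crosses x' y' = false ∧ G'.crosses y' z' = false)) ∧
    G.sign z = -G.sign x ∧ G.sign y = G.sign x) ∨
  -- (2,1) triangle move, the single intersection being between y and z
  (((G.crosses y z = true ∧ G.crosses x y = false ∧ G.crosses x z = false) ∨
    (G'.crosses y' z' = true ∧ G'.crosses x' y' = false ∧ G'.crosses x' z' = false)) ∧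
    G.sign y = G.sign x ∧ G.sign z = G.sign x)

/-- The triangle move: three chords `x y z` of `G` forming a triangle with three
adjacent-position vertices (one head–head, one foot–foot, one mixed), in an admissible
sign/orientation configuration, slide past each other: in `G'` each pair of adjacent
endpoints has been interchanged, while everything else is unchanged. -/
def TriangleMove (G G' : GaussDiagram) : Prop :=
  G.Proper ∧ G'.Proper ∧
  ∃ (e : Fin G.n → Fin G'.n) (φ : Fin (2 * G.n) → Fin (2 * G'.n))
    (x y z : Fin G.n) (w₁ w₂ w₃ : Fin (2 * G.n)),
    Function.Bijective e ∧ Function.Bijective φ ∧ CyclicMap φ ∧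
    TriangleVertices G x y z w₁ w₂ w₃ ∧
    (∀ i, G'.sign (e i) = G.sign i) ∧
    (∀ i, i ≠ x → i ≠ y → i ≠ z →
      G'.head (e i) = φ (G.head i) ∧ G'.foot (e i) = φ (G.foot i)) ∧
    -- sliding: each of the six endpoints is exchanged with its partner in its vertex pair
    ((G'.head (e x) = φ (G.head y) ∧ G'.head (e y) = φ (G.head x)) ∧
     (G'.foot (e x) = φ (G.foot z) ∧ G'.foot (e z) = φ (G.foot x)) ∧
     (G'.foot (e y) = φ (G.head z) ∧ G'.head (e z) = φ (G.foot y))) ∧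
    AdmissibleSigns G G' x y z (e x) (e y) (e z)

/-- One chord move (in either direction) between Gauss diagrams. -/
def GaussMove (G G' : GaussDiagram) : Prop :=
  SingleChordMove G G' ∨ SingleChordMove G' G ∨
  TwoChordMove G G' ∨ TwoChordMove G' G ∨
  TriangleMove G G' ∨ TriangleMove G' G

/-! ## Invariants from parity -/

namespace GaussDiagram

/-- `|A_i(G)|`: the signed cardinality of the set of chords of parity `i`. -/
def cardA (G : GaussDiagram) (i : ℤ) : ℤ :=
  ∑ c : Fin G.n, if G.parity c = i then G.sign c else 0

/-- `|A_Z(G)|`: the signed cardinality of the set of tuples of chords with parities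
prescribed by `Z`. -/
def cardATuple (G : GaussDiagram) {k : ℕ} (Z : Fin k → ℤ) : ℤ :=
  ∑ t : Fin k → Fin G.n,
    if ∀ j, G.parity (t j) = Z j then ∏ j, G.sign (t j) else 0

/-- `|V_i(G)|`: the signed cardinality of the set of chords whose parity has absolute
value `i`. -/
def cardV (G : GaussDiagram) (i : ℤ) : ℤ :=
  ∑ c : Fin G.n, if |G.parity c| = i then G.sign c else 0

/-- `|V_Z(G)|`: the signed cardinality of the set of tuples of chords whose parities have
absolute values prescribed by `Z`. -/
def cardVTuple (G : GaussDiagram) {k : ℕ} (Z : Fin k → ℤ) : ℤ :=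
  ∑ t : Fin k → Fin G.n,
    if ∀ j, |G.parity (t j)| = Z j then ∏ j, G.sign (t j) else 0

/-- Flip (reverse the orientation of and negate the sign of) every chord in `S`;
this corresponds to crossing changes in the corresponding virtual knot diagram. -/
def flipSet (G : GaussDiagram) (S : Finset (Fin G.n)) : GaussDiagram where
  n := G.n
  head := fun i => if i ∈ S then G.foot i else G.head i
  foot := fun i => if i ∈ S then G.head i else G.foot i
  sign := fun i => if i ∈ S then -G.sign i else G.sign i

end GaussDiagram

/-! ## Smoothing and flat diagrams -/

/-- The chord of the smaller diagram indexed by `i` corresponds to the chord `skipAt x i`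
of the original diagram (skipping the smoothed chord `x`). -/
def skipAt {n : ℕ} (x : Fin n) (i : Fin (n - 1)) : Fin n :=
  if h : i.1 < x.1 then ⟨i.1, lt_trans h x.2⟩ else ⟨i.1 + 1, by have := i.2; omega⟩

/-- Relabelling of the circle positions after vertically smoothing the chord with head at
position `h` and foot at position `f` (on a circle with `m` positions): the two positions
`h` and `f` are deleted and the arc strictly between `h` and `f` is reversed. -/
def smoothPos (m h f p : ℕ) : ℕ :=
  let d := (f + m - (h + 1)) % m
  let r := (p + m - (h + 1)) % m
  if r < d then d - 1 - r else r - 1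

/-- Vertical smoothing of the chord `x` of a Gauss diagram: the chord `x` is deleted and
the cyclic order of the arc of endpoints lying strictly between the two endpoints of `x`
is reversed. -/
def GaussDiagram.smooth (G : GaussDiagram) (x : Fin G.n) : GaussDiagram where
  n := G.n - 1
  head := fun i =>
    ⟨smoothPos (2 * G.n) (G.head x).1 (G.foot x).1 (G.head (skipAt x i)).1 % (2 * (G.n - 1)),
      Nat.mod_lt _ (by have := i.2; omega)⟩
  foot := fun i =>
    ⟨smoothPos (2 * G.n) (G.head x).1 (G.foot x).1 (G.foot (skipAt x i)).1 % (2 * (G.n - 1)),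
      Nat.mod_lt _ (by have := i.2; omega)⟩
  sign := fun i => G.sign (skipAt x i)

/-- The index of chord `i ≠ x` in the diagram obtained by smoothing the chord `x`. -/
def unskip? {n : ℕ} (x i : Fin n) : Option (Fin (n - 1)) :=
  if h : i.1 < x.1 then some ⟨i.1, by have := x.2; omega⟩
  else if h' : x.1 < i.1 then some ⟨i.1 - 1, by have := i.2; omega⟩
  else none

/-- Smoothing a list of chords, one after the other. -/
def GaussDiagram.smoothList : (G : GaussDiagram) → List (Fin G.n) → GaussDiagram
  | G, [] => G
  | G, x :: xs => (G.smooth x).smoothList (xs.filterMap (unskip? x))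
termination_by G l => l.length
decreasing_by simpa using Nat.lt_succ_of_le (List.length_filterMap_le _ _)

/-- A flat Gauss diagram: a chord diagram on the circle with no signs and no head/foot
designations. -/
structure FlatDiagram where
  n : ℕ
  fst : Fin n → Fin (2 * n)
  snd : Fin n → Fin (2 * n)

namespace FlatDiagram

/-- A genuine flat diagram: the `2n` endpoints are distinct. -/
def Proper (F : FlatDiagram) : Prop := Function.Injective (Sum.elim F.fst F.snd)

/-- The (unordered) endpoints of the chord `y` are `u` and `v`. -/
def hasEnds (F : FlatDiagram) (y : Fin F.n) (u v : Fin (2 * F.n)) : Prop :=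
  (F.fst y = u ∧ F.snd y = v) ∨ (F.fst y = v ∧ F.snd y = u)

end FlatDiagram

/-- Forgetting all signs and head/foot designations of a Gauss diagram. -/
def GaussDiagram.flatten (G : GaussDiagram) : FlatDiagram := ⟨G.n, G.head, G.foot⟩

/-- Isomorphism of flat diagrams: a bijection of chords induced by a bijection of the
circle preserving (or reversing) the cyclic order. -/
def FlatIso (F F' : FlatDiagram) : Prop :=
  ∃ (e : Fin F.n → Fin F'.n) (φ : Fin (2 * F.n) → Fin (2 * F'.n)),
    Function.Bijective e ∧ Function.Bijective φ ∧ (CyclicMap φ ∨ AntiCyclicMap φ) ∧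
    ∀ i, F'.hasEnds (e i) (φ (F.fst i)) (φ (F.snd i))

/-- Flat single chord move: insertion of a chord with adjacent endpoints. -/
def FlatSingleMove (F F' : FlatDiagram) : Prop :=
  F.Proper ∧ F'.Proper ∧ F'.n = F.n + 1 ∧
  ∃ (e : Fin F.n → Fin F'.n) (φ : Fin (2 * F.n) → Fin (2 * F'.n)) (y : Fin F'.n),
    Function.Injective e ∧ (∀ i, e i ≠ y) ∧ CyclicMap φ ∧
    (∀ i, F'.hasEnds (e i) (φ (F.fst i)) (φ (F.snd i))) ∧
    adjPos (F'.fst y) (F'.snd y)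

/-- Flat two chord move: insertion of a parallel pair of chords with pairwise adjacent
endpoints. -/
def FlatTwoMove (F F' : FlatDiagram) : Prop :=
  F.Proper ∧ F'.Proper ∧ F'.n = F.n + 2 ∧
  ∃ (e : Fin F.n → Fin F'.n) (φ : Fin (2 * F.n) → Fin (2 * F'.n)) (y₁ y₂ : Fin F'.n)
    (p q : Fin (2 * F'.n)),
    Function.Injective e ∧ y₁ ≠ y₂ ∧ (∀ i, e i ≠ y₁ ∧ e i ≠ y₂) ∧ CyclicMap φ ∧
    (∀ i, F'.hasEnds (e i) (φ (F.fst i)) (φ (F.snd i))) ∧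
    F'.hasEnds y₁ p q ∧ F'.hasEnds y₂ (psucc p) (psucc q)

/-- Flat triangle move: three chords whose six endpoints form three adjacent-position
vertex pairs slide past each other (no sign or orientation conditions). -/
def FlatTriangleMove (F F' : FlatDiagram) : Prop :=
  F.Proper ∧ F'.Proper ∧
  ∃ (e : Fin F.n → Fin F'.n) (φ : Fin (2 * F.n) → Fin (2 * F'.n))
    (x y z : Fin F.n) (w₁ w₂ w₃ α₁ β₁ α₂ β₂ α₃ β₃ : Fin (2 * F.n)),
    Function.Bijective e ∧ Function.Bijective φ ∧ CyclicMap φ ∧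
    x ≠ y ∧ y ≠ z ∧ x ≠ z ∧
    ((α₁ = w₁ ∧ β₁ = psucc w₁) ∨ (α₁ = psucc w₁ ∧ β₁ = w₁)) ∧
    ((α₂ = w₂ ∧ β₂ = psucc w₂) ∨ (α₂ = psucc w₂ ∧ β₂ = w₂)) ∧
    ((α₃ = w₃ ∧ β₃ = psucc w₃) ∨ (α₃ = psucc w₃ ∧ β₃ = w₃)) ∧
    F.hasEnds x α₁ α₂ ∧ F.hasEnds y β₁ α₃ ∧ F.hasEnds z β₂ β₃ ∧
    F'.hasEnds (e x) (φ β₁) (φ β₂) ∧ F'.hasEnds (e y) (φ α₁) (φ β₃) ∧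
    F'.hasEnds (e z) (φ α₂) (φ α₃) ∧
    (∀ i, i ≠ x → i ≠ y → i ≠ z → F'.hasEnds (e i) (φ (F.fst i)) (φ (F.snd i)))

/-- Generating relation for flat equivalence of flat diagrams. -/
def FlatRel (F F' : FlatDiagram) : Prop :=
  FlatIso F F' ∨ FlatSingleMove F F' ∨ FlatSingleMove F' F ∨
  FlatTwoMove F F' ∨ FlatTwoMove F' F ∨ FlatTriangleMove F F' ∨ FlatTriangleMove F' F

/-- Flat equivalence classes of flat Gauss diagrams. -/
def FlatClass : Type := Quot FlatRel

/-- The flat equivalence class of a flat diagram. -/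
def Fclass (F : FlatDiagram) : FlatClass := Quot.mk _ F

/-! ## The invariants `S_i` and `S_Z` -/

/-- `S_i(G) = ∑_{x ∈ V_i(G)} sgn(x) · F(G^x)`, an element of the free ℤ-module on flat
equivalence classes of flat Gauss diagrams. -/
noncomputable def Sone (G : GaussDiagram) (i : ℤ) : FlatClass →₀ ℤ :=
  ∑ x : Fin G.n,
    if |G.parity x| = i then
      Finsupp.single (Fclass (G.smooth x).flatten) (G.sign x)
    else 0

/-- `S_Z(G) = ∑_{x̄ ∈ V_Z(G)} sgn(x₁)⋯sgn(x_n) · F(G^{x̄})`, an element of the free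
ℤ-module on flat equivalence classes of flat Gauss diagrams. -/
noncomputable def SZ (G : GaussDiagram) {k : ℕ} (Z : Fin k → ℤ) : FlatClass →₀ ℤ :=
  ∑ t : Fin k → Fin G.n,
    if ∀ j, |G.parity (t j)| = Z j then
      Finsupp.single (Fclass (G.smoothList (List.ofFn t)).flatten) (∏ j, G.sign (t j))
    else 0

/-- The arc predicate does not change between cyclically adjacent positions `u` and
`v = u+1 (mod m)` unless `u = a` or `v = b`. -/
lemma arc_adj {m a b u v : ℕ} (ha : a < m) (hb : b < m) (hu : u < m) (hv : v < m)
    (hvu : v = (u + 1) % m) (hua : u ≠ a) (hvb : v ≠ b) :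
    arc a b u = arc a b v := by
  have hcase : v = u + 1 ∨ (u + 1 = m ∧ v = 0) := by
    rcases Nat.lt_or_ge (u + 1) m with h | h
    · left; rw [hvu, Nat.mod_eq_of_lt h]
    · right
      have h1 : u + 1 = m := by omega
      exact ⟨h1, by rw [hvu, h1, Nat.mod_self]⟩
  unfold arc
  rcases hcase with h | ⟨h1, h2⟩ <;> subst_vars <;> split_ifs <;>
    simp only [decide_eq_decide] <;> omega

/-- If `G'` is obtained from the Gauss diagram `G` by a single chord move
(inserting a new chord `y` whose two endpoints occupy adjacent positions of the circle, so
that it intersects no other chord), then every chord of `G` has the same parity in `G'`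
(where it appears as `e c`) as in `G`. -/
theorem single_chord_move_preserves_parity
    (G G' : GaussDiagram) (hG : G.Proper) (hG' : G'.Proper) (hn : G'.n = G.n + 1)
    (e : Fin G.n → Fin G'.n) (φ : Fin (2 * G.n) → Fin (2 * G'.n)) (y : Fin G'.n)
    (he : Function.Injective e) (hey : ∀ i, e i ≠ y) (hφ : CyclicMap φ)
    (hmatch : ∀ i, G'.head (e i) = φ (G.head i) ∧ G'.foot (e i) = φ (G.foot i) ∧
      G'.sign (e i) = G.sign i)
    (hadj : adjPos (G'.head y) (G'.foot y)) :
    ∀ c, G'.parity (e c) = G.parity c := by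
  intro c
  -- distinctness of endpoints in G'
  have hinj' := hG'.1
  have hne : ∀ (i j : Fin G'.n), i ≠ j → (G'.head i).1 ≠ (G'.head j).1 := by
    intro i j hij h
    exact hij (Sum.inl_injective (hinj' (a₁ := Sum.inl i) (a₂ := Sum.inl j)
      (Fin.val_injective h)))
  have hnehf : ∀ (i j : Fin G'.n), (G'.head i).1 ≠ (G'.foot j).1 := by
    intro i j h
    exact absurd (hinj' (a₁ := Sum.inl i) (a₂ := Sum.inr j) (Fin.val_injective h))
      (by simp)
  have hnef : ∀ (i j : Fin G'.n), i ≠ j → (G'.foot i).1 ≠ (G'.foot j).1 := by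
    intro i j hij h
    exact hij (Sum.inr_injective (hinj' (a₁ := Sum.inr i) (a₂ := Sum.inr j)
      (Fin.val_injective h)))
  set a := (G'.head (e c)).1 with ha
  set b := (G'.foot (e c)).1 with hb
  -- the new chord does not cross e c
  have harcy : arc a b (G'.head y).1 = arc a b (G'.foot y).1 := by
    have h1 : (G'.head y).1 ≠ a := hne y (e c) (fun h => hey c h.symm)
    have h2 : (G'.head y).1 ≠ b := hnehf y (e c)
    have h3 : (G'.foot y).1 ≠ a := fun h => hnehf (e c) y h.symm
    have h4 : (G'.foot y).1 ≠ b := hnef y (e c) (fun h => hey c h.symm)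
    rcases hadj with h | h
    · exact arc_adj (G'.head (e c)).2 (G'.foot (e c)).2 (G'.head y).2 (G'.foot y).2
        (by rw [h]; rfl) h1 h4
    · exact (arc_adj (G'.head (e c)).2 (G'.foot (e c)).2 (G'.foot y).2 (G'.head y).2
        (by rw [h]; rfl) h3 h2).symm
  have hcy : G'.crosses (e c) y = false := by
    unfold GaussDiagram.crosses
    rw [← ha, ← hb, harcy]
    simp
  -- terms for old chords agree
  have key : ∀ i : Fin G.n,
      (if G'.crosses (e c) (e i) then G'.sign (e i) * G'.inter (e c) (e i) else 0)
      = (if G.crosses c i then G.sign i * G.inter c i else 0) := by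
    intro i
    obtain ⟨hh, hf, hs⟩ := hmatch i
    obtain ⟨hhc, hfc, _⟩ := hmatch c
    have hbne : (e i != e c) = (i != c) := by
      simp only [bne, Bool.not_inj_iff, beq_eq_beq]
      exact he.eq_iff
    have harc1 : arc a b (G'.head (e i)).1 = arc (G.head c).1 (G.foot c).1 (G.head i).1 := by
      rw [ha, hb, hhc, hfc, hh, ← hφ]
    have harc2 : arc a b (G'.foot (e i)).1 = arc (G.head c).1 (G.foot c).1 (G.foot i).1 := by
      rw [ha, hb, hhc, hfc, hf, ← hφ]
    have hcr : G'.crosses (e c) (e i) = G.crosses c i := by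
      unfold GaussDiagram.crosses
      rw [← ha, ← hb, hbne, harc1, harc2]
    have hint : G'.inter (e c) (e i) = G.inter c i := by
      unfold GaussDiagram.inter
      rw [← ha, ← hb, harc1]
    rw [hcr, hint, hs]
  -- decompose the index set of G'
  have hymem : y ∉ Finset.image e Finset.univ := by
    simp only [Finset.mem_image]
    rintro ⟨i, -, hi⟩
    exact hey i hi
  have huniv : (Finset.univ : Finset (Fin G'.n)) = insert y (Finset.image e Finset.univ) := by
    refine (Finset.eq_of_subset_of_card_le (Finset.subset_univ _) ?_).symm
    rw [Finset.card_insert_of_notMem hymem, Finset.card_image_of_injective _ he]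
    simp [hn]
  unfold GaussDiagram.parity
  rw [huniv, Finset.sum_insert hymem,
    Finset.sum_image (fun x _ y _ h => he h), hcy]
  simp only [Bool.false_eq_true, if_false, zero_add]
  exact Finset.sum_congr rfl fun i _ => key i
end

section
/- Let a and b be two chords of a Gauss diagram with opposite signs whose heads occupy adjacent positions on the circle and whose feet occupy adjacent positions on the circle (the configuration of a two chord move). Then every other chord c that intersects a also intersects b, it satisfies int_c(a) = int_c(b), and consequently sgn(a)·int_c(a) + sgn(b)·int_c(b) = 0. -/
lemma arc_succ (m A B p : ℕ) (hA : A < m) (hB : B < m) (hp : p < m)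
    (hpA : p ≠ A) (hqB : (p + 1) % m ≠ B) :
    arc A B p = arc A B ((p + 1) % m) := by
  rcases Nat.lt_or_ge (p + 1) m with h | h
  · rw [Nat.mod_eq_of_lt h] at hqB ⊢
    unfold arc
    split <;> simp only [decide_eq_decide] <;> omega
  · have hpm : p + 1 = m := by omega
    have hm : (p + 1) % m = 0 := by simp [hpm]
    rw [hm] at hqB ⊢
    unfold arc
    split <;> simp only [decide_eq_decide] <;> omega

lemma arc_adj_s2 {m : ℕ} (A B : ℕ) (u v : Fin m) (huv : adjPos u v)
    (hA : A < m) (hB : B < m) (huA : u.1 ≠ A) (huB : u.1 ≠ B) (hvA : v.1 ≠ A) (hvB : v.1 ≠ B) :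
    arc A B u.1 = arc A B v.1 := by
  rcases huv with h | h
  · have : v.1 = (u.1 + 1) % m := by rw [h]; rfl
    rw [this]; exact arc_succ m A B u.1 hA hB u.2 huA (this ▸ hvB)
  · have : u.1 = (v.1 + 1) % m := by rw [h]; rfl
    rw [this]; exact (arc_succ m A B v.1 hA hB v.2 hvA (this ▸ huB)).symm

/-- If `a` and `b` are two chords of opposite sign whose heads occupy
adjacent positions and whose feet occupy adjacent positions (the configuration of a two
chord move), then every other chord `c` intersecting `a` also intersects `b`, satisfies
`int_c(a) = int_c(b)`, and hence `sgn(a)·int_c(a) + sgn(b)·int_c(b) = 0`. -/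
theorem two_chord_configuration
    (G : GaussDiagram) (hG : G.Proper) (a b : Fin G.n) (hab : a ≠ b)
    (hsign : G.sign a = -G.sign b)
    (hheads : adjPos (G.head a) (G.head b)) (hfeet : adjPos (G.foot a) (G.foot b)) :
    ∀ c, c ≠ a → c ≠ b → G.crosses c a = true →
      G.crosses c b = true ∧ G.inter c a = G.inter c b ∧
      G.sign a * G.inter c a + G.sign b * G.inter c b = 0 := by
  intro c hca hcb hcross
  have hinj := hG.1
  have hHH : ∀ i j : Fin G.n, i ≠ j → G.head i ≠ G.head j := by
    intro i j hij h
    exact hij (Sum.inl_injective (hinj (a₁ := Sum.inl i) (a₂ := Sum.inl j) h))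
  have hHF : ∀ i j : Fin G.n, G.head i ≠ G.foot j := by
    intro i j h
    simpa using hinj (a₁ := Sum.inl i) (a₂ := Sum.inr j) h
  have hFF : ∀ i j : Fin G.n, i ≠ j → G.foot i ≠ G.foot j := by
    intro i j hij h
    exact hij (Sum.inr_injective (hinj (a₁ := Sum.inr i) (a₂ := Sum.inr j) h))
  set A := (G.head c).1 with hA
  set B := (G.foot c).1 with hBdef
  have hvne : ∀ u v : Fin (2 * G.n), u ≠ v → u.1 ≠ v.1 := fun u v h hh => h (Fin.ext hh)
  have hheadeq : arc A B (G.head a).1 = arc A B (G.head b).1 :=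
    arc_adj_s2 A B (G.head a) (G.head b) hheads (G.head c).2 (G.foot c).2
      (hvne _ _ (hHH a c (Ne.symm hca))) (hvne _ _ (hHF a c))
      (hvne _ _ (hHH b c (Ne.symm hcb))) (hvne _ _ (hHF b c))
  have hfooteq : arc A B (G.foot a).1 = arc A B (G.foot b).1 :=
    arc_adj_s2 A B (G.foot a) (G.foot b) hfeet (G.head c).2 (G.foot c).2
      (fun h => hHF c a (Fin.ext h.symm)) (hvne _ _ (hFF a c (Ne.symm hca)))
      (fun h => hHF c b (Fin.ext h.symm)) (hvne _ _ (hFF b c (Ne.symm hcb)))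
  simp only [GaussDiagram.crosses, Bool.and_eq_true, bne_iff_ne, ne_eq] at hcross ⊢
  obtain ⟨hac, harc⟩ := hcross
  refine ⟨⟨Ne.symm hcb, ?_⟩, ?_, ?_⟩
  · rw [← hheadeq, ← hfooteq]; exact harc
  · simp only [GaussDiagram.inter, ← hA, ← hBdef, hheadeq]
  · have : G.inter c a = G.inter c b := by
      simp only [GaussDiagram.inter, ← hA, ← hBdef, hheadeq]
    rw [this, hsign]; ring
end

section
/- Let G be a Gauss diagram and let G' be obtained from G by a two chord move, i.e. by inserting a pair of chords a, b with sgn(a) = −sgn(b) whose heads occupy adjacent positions on the circle and whose feet occupy adjacent positions on the circle. Then for every chord c of G, the parity of c computed in G' equals the parity of c computed in G. -/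
/-- Adjacent positions, both distinct from the arc endpoints, lie on the same side. -/
lemma arc_adj_s3 {m : ℕ} (a b p q : ℕ) (ha : a < m) (hb : b < m) (hp : p < m)
    (hq : q = (p + 1) % m) (hpa : p ≠ a) (hpb : p ≠ b) (hqa : q ≠ a) (hqb : q ≠ b) :
    arc a b p = arc a b q := by
  rcases Nat.lt_or_ge (p + 1) m with h | h
  · rw [Nat.mod_eq_of_lt h] at hq
    subst hq
    unfold arc
    split_ifs <;> simp only [decide_eq_decide] <;> omega
  · have hq0 : q = 0 := by
      have hpm : p + 1 = m := by omega
      rw [hq, hpm, Nat.mod_self]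
    subst hq0
    unfold arc
    split_ifs <;> simp only [decide_eq_decide] <;> omega

/-- Adjacent positions (in either order), both distinct from the arc endpoints,
lie on the same side. -/
lemma arc_adjPos {m : ℕ} (a b : ℕ) (u v : Fin m) (ha : a < m) (hb : b < m)
    (huv : adjPos u v) (hua : u.1 ≠ a) (hub : u.1 ≠ b) (hva : v.1 ≠ a) (hvb : v.1 ≠ b) :
    arc a b u.1 = arc a b v.1 := by
  rcases huv with h | h
  · exact arc_adj_s3 a b u.1 v.1 ha hb u.2 (by rw [h]; rfl) hua hub hva hvb
  · exact (arc_adj_s3 a b v.1 u.1 ha hb v.2 (by rw [h]; rfl) hva hvb hua hub).symm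

/-- If `G'` is obtained from the Gauss diagram `G` by a two chord move
(inserting a pair of oppositely signed chords `y₁, y₂` whose heads occupy adjacent
positions and whose feet occupy adjacent positions of the circle), then every chord of `G`
has the same parity in `G'` (where it appears as `e c`) as in `G`. -/
theorem two_chord_move_preserves_parity
    (G G' : GaussDiagram) (hG : G.Proper) (hG' : G'.Proper) (hn : G'.n = G.n + 2)
    (e : Fin G.n → Fin G'.n) (φ : Fin (2 * G.n) → Fin (2 * G'.n)) (y₁ y₂ : Fin G'.n)
    (he : Function.Injective e) (hyy : y₁ ≠ y₂) (hey : ∀ i, e i ≠ y₁ ∧ e i ≠ y₂)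
    (hφ : CyclicMap φ)
    (hmatch : ∀ i, G'.head (e i) = φ (G.head i) ∧ G'.foot (e i) = φ (G.foot i) ∧
      G'.sign (e i) = G.sign i)
    (hheads : adjPos (G'.head y₁) (G'.head y₂)) (hfeet : adjPos (G'.foot y₁) (G'.foot y₂))
    (hsign : G'.sign y₁ = -G'.sign y₂) :
    ∀ c, G'.parity (e c) = G.parity c := by
  intro c
  have hinj := hG'.1
  -- distinctness of endpoints in G'
  have hne_hh : ∀ {i j : Fin G'.n}, i ≠ j → (G'.head i).1 ≠ (G'.head j).1 := by
    intro i j hij h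
    exact hij (by
      have : (Sum.elim G'.head G'.foot) (Sum.inl i) = (Sum.elim G'.head G'.foot) (Sum.inl j) := by
        simpa using Fin.ext h
      simpa using hinj this)
  have hne_ff : ∀ {i j : Fin G'.n}, i ≠ j → (G'.foot i).1 ≠ (G'.foot j).1 := by
    intro i j hij h
    exact hij (by
      have : (Sum.elim G'.head G'.foot) (Sum.inr i) = (Sum.elim G'.head G'.foot) (Sum.inr j) := by
        simpa using Fin.ext h
      simpa using hinj this)
  have hne_hf : ∀ (i j : Fin G'.n), (G'.head i).1 ≠ (G'.foot j).1 := by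
    intro i j h
    have := hinj (a₁ := Sum.inl i) (a₂ := Sum.inr j) (by simpa using Fin.ext h)
    simp at this
  have hcy1 : e c ≠ y₁ := (hey c).1
  have hcy2 : e c ≠ y₂ := (hey c).2
  -- heads of y₁, y₂ lie on the same side of chord e c
  have A : arc (G'.head (e c)).1 (G'.foot (e c)).1 (G'.head y₁).1
         = arc (G'.head (e c)).1 (G'.foot (e c)).1 (G'.head y₂).1 :=
    arc_adjPos _ _ _ _ (G'.head (e c)).2 (G'.foot (e c)).2 hheads
      (hne_hh (fun h => hcy1 h.symm)) (hne_hf _ _)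
      (hne_hh (fun h => hcy2 h.symm)) (hne_hf _ _)
  have B : arc (G'.head (e c)).1 (G'.foot (e c)).1 (G'.foot y₁).1
         = arc (G'.head (e c)).1 (G'.foot (e c)).1 (G'.foot y₂).1 :=
    arc_adjPos _ _ _ _ (G'.head (e c)).2 (G'.foot (e c)).2 hfeet
      (fun h => hne_hf _ _ h.symm) (hne_ff (fun h => hcy1 h.symm))
      (fun h => hne_hf _ _ h.symm) (hne_ff (fun h => hcy2 h.symm))
  have hb1 : (y₁ != e c) = true := by simpa [bne_iff_ne] using fun h => hcy1 h.symm
  have hb2 : (y₂ != e c) = true := by simpa [bne_iff_ne] using fun h => hcy2 h.symm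
  have hcy : G'.crosses (e c) y₁ = G'.crosses (e c) y₂ := by
    unfold GaussDiagram.crosses
    rw [hb1, hb2, A, B]
  have hiy : G'.inter (e c) y₁ = G'.inter (e c) y₂ := by
    unfold GaussDiagram.inter
    rw [A]
  have hycancel :
      ((if G'.crosses (e c) y₁ then G'.sign y₁ * G'.inter (e c) y₁ else 0) +
       (if G'.crosses (e c) y₂ then G'.sign y₂ * G'.inter (e c) y₂ else 0)) = 0 := by
    rw [hcy, hiy, hsign]
    split_ifs <;> ring
  -- the universe of G' decomposes as image of e plus {y₁, y₂}
  have hdisj : Disjoint (Finset.univ.image e) ({y₁, y₂} : Finset (Fin G'.n)) := by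
    rw [Finset.disjoint_left]
    intro x hx hx2
    simp only [Finset.mem_image, Finset.mem_univ, true_and] at hx
    obtain ⟨i, rfl⟩ := hx
    simp only [Finset.mem_insert, Finset.mem_singleton] at hx2
    rcases hx2 with rfl | rfl
    · exact (hey i).1 rfl
    · exact (hey i).2 rfl
  have hset : (Finset.univ : Finset (Fin G'.n)) = (Finset.univ.image e) ∪ {y₁, y₂} := by
    symm
    apply Finset.eq_univ_of_card
    rw [Finset.card_union_of_disjoint hdisj,
      Finset.card_image_of_injective _ he, Finset.card_pair hyy]
    simp [hn]
  unfold GaussDiagram.parity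
  rw [hset, Finset.sum_union hdisj,
    Finset.sum_image (fun i _ j _ h => he h), Finset.sum_pair hyy, hycancel, add_zero]
  apply Finset.sum_congr rfl
  intro i _
  obtain ⟨hc1, hc2, -⟩ := hmatch c
  obtain ⟨hi1, hi2, hi3⟩ := hmatch i
  have hcr : G'.crosses (e c) (e i) = G.crosses c i := by
    unfold GaussDiagram.crosses
    rw [hc1, hc2, hi1, hi2, ← hφ, ← hφ]
    congr 1
    simp [bne, he.eq_iff]
  have hint : G'.inter (e c) (e i) = G.inter c i := by
    unfold GaussDiagram.inter
    rw [hc1, hc2, hi1, ← hφ]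
  rw [hcr, hint, hi3]
end

section
/- Let G and G' be Gauss diagrams related by a (3,0) triangle move: three chords a, b, c whose six endpoints contain three pairs of adjacent circle positions forming the vertices of a triangle — one vertex consisting of two heads, one of two feet, and one of a head and a foot — are switched between a configuration in which a, b, c pairwise do not intersect and a configuration in which they pairwise intersect, by sliding each adjacent pair of endpoints past each other while all other endpoints are fixed; the signs and orientations of a, b, c are in one of the admissible configurations (the configuration with sgn(a) = sgn(b) = +1 and sgn(c) = −1 exhibited in the paper, together with the configurations obtained from it by simultaneously reversing the sign and orientation of the two chords meeting at the head–head vertex, or of the two chords meeting at the foot–foot vertex, on both sides of the move). Then every chord of G, including a, b and c, has the same parity in G' as in G. -/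
/-! ### Auxiliary lemmas for the triangle move -/

section TriangleAux

lemma arc_pt {m a b p q : ℕ} (ha : a < m) (hb : b < m) (hp : p < m) (hq : q < m)
    (hadj : (q = p + 1 ∨ (p + 1 = m ∧ q = 0)) ∨ (p = q + 1 ∨ (q + 1 = m ∧ p = 0)))
    (hap : a ≠ p) (haq : a ≠ q) (hbp : b ≠ p) (hbq : b ≠ q) :
    arc a b p = arc a b q := by
  unfold arc; split_ifs with h <;> rw [decide_eq_decide] <;> omega

lemma arc_left {m a a' b p : ℕ} (ha : a < m) (ha' : a' < m) (hb : b < m) (hp : p < m)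
    (hadj : (a' = a + 1 ∨ (a + 1 = m ∧ a' = 0)) ∨ (a = a' + 1 ∨ (a' + 1 = m ∧ a = 0)))
    (hba : b ≠ a) (hba' : b ≠ a') (hpa : p ≠ a) (hpa' : p ≠ a') :
    arc a b p = arc a' b p := by
  unfold arc; split_ifs with h h' h' <;> rw [decide_eq_decide] <;> omega

lemma arc_right {m a b b' p : ℕ} (ha : a < m) (hb : b < m) (hb' : b' < m) (hp : p < m)
    (hadj : (b' = b + 1 ∨ (b + 1 = m ∧ b' = 0)) ∨ (b = b' + 1 ∨ (b' + 1 = m ∧ b = 0)))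
    (hab : a ≠ b) (hab' : a ≠ b') (hpb : p ≠ b) (hpb' : p ≠ b') :
    arc a b p = arc a b' p := by
  unfold arc; split_ifs with h h' h' <;> rw [decide_eq_decide] <;> omega

lemma arc_sym {m a b p q : ℕ} (ha : a < m) (hb : b < m) (hp : p < m) (hq : q < m)
    (hab : a ≠ b) (hpq : p ≠ q) (hap : a ≠ p) (haq : a ≠ q) (hbp : b ≠ p) (hbq : b ≠ q) :
    (arc a b p != arc a b q) = (arc p q a != arc p q b) := by
  rw [Bool.eq_iff_iff, bne_iff_ne, bne_iff_ne]
  unfold arc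
  split_ifs <;> simp only [ne_eq, decide_eq_decide] <;> omega

lemma head_ne_foot (G : GaussDiagram) (h : G.Proper) (i j : Fin G.n) :
    (G.head i).1 ≠ (G.foot j).1 := by
  intro hval
  have h2 : (Sum.inl i : Fin G.n ⊕ Fin G.n) = Sum.inr j := h.1 (Fin.val_injective hval)
  simp at h2

lemma head_ne_head (G : GaussDiagram) (h : G.Proper) {i j : Fin G.n} (hij : i ≠ j) :
    (G.head i).1 ≠ (G.head j).1 := by
  intro hval
  have h2 : (Sum.inl i : Fin G.n ⊕ Fin G.n) = Sum.inl j := h.1 (Fin.val_injective hval)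
  simp at h2; exact hij h2

lemma foot_ne_foot (G : GaussDiagram) (h : G.Proper) {i j : Fin G.n} (hij : i ≠ j) :
    (G.foot i).1 ≠ (G.foot j).1 := by
  intro hval
  have h2 : (Sum.inr i : Fin G.n ⊕ Fin G.n) = Sum.inr j := h.1 (Fin.val_injective hval)
  simp at h2; exact hij h2

lemma crosses_symm (G : GaussDiagram) (h : G.Proper) (c d : Fin G.n) :
    G.crosses c d = G.crosses d c := by
  by_cases hcd : c = d
  · subst hcd; rfl
  · unfold GaussDiagram.crosses
    rw [bne_iff_ne.mpr (Ne.symm hcd), bne_iff_ne.mpr hcd, Bool.true_and, Bool.true_and]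
    exact arc_sym (G.head c).2 (G.foot c).2 (G.head d).2 (G.foot d).2
      (head_ne_foot G h c c) (head_ne_foot G h d d)
      (head_ne_head G h hcd) (head_ne_foot G h c d)
      ((head_ne_foot G h d c).symm) (foot_ne_foot G h hcd)

lemma adj_expand {m : ℕ} {p q : Fin m} (h : q = psucc p ∨ p = psucc q) :
    (q.1 = p.1 + 1 ∨ (p.1 + 1 = m ∧ q.1 = 0)) ∨ (p.1 = q.1 + 1 ∨ (q.1 + 1 = m ∧ p.1 = 0)) := by
  have key : ∀ u v : Fin m, v = psucc u → (v.1 = u.1 + 1 ∨ (u.1 + 1 = m ∧ v.1 = 0)) := by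
    intro u v hv
    rcases Nat.lt_or_ge (u.1 + 1) m with hh | hh
    · left; rw [hv]; simp [psucc, Nat.mod_eq_of_lt hh]
    · right
      have hm : u.1 + 1 = m := by have := u.2; omega
      exact ⟨hm, by rw [hv]; simp [psucc, hm]⟩
  rcases h with h | h
  · exact Or.inl (key _ _ h)
  · exact Or.inr (key _ _ h)

/-- The head position of the chord `j` after the (3,0) triangle move, expressed in the
coordinates of the original diagram. -/
def nhAux (G : GaussDiagram) (x y z : Fin G.n) (j : Fin G.n) : ℕ :=
  if j = x then (G.head y).1 else if j = y then (G.head x).1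
  else if j = z then (G.foot y).1 else (G.head j).1

/-- The foot position of the chord `j` after the (3,0) triangle move, expressed in the
coordinates of the original diagram. -/
def nfAux (G : GaussDiagram) (x y z : Fin G.n) (j : Fin G.n) : ℕ :=
  if j = x then (G.foot z).1 else if j = y then (G.head z).1
  else if j = z then (G.foot x).1 else (G.foot j).1

end TriangleAux

/-- A (3,0) triangle move: three chords `x, y, z` of `G` whose six
endpoints form three pairs of adjacent circle positions (one head–head vertex `w₁`,
one foot–foot vertex `w₂`, one mixed vertex `w₃`, with `x` joining the head–head vertex to
the foot–foot vertex) slide past each other — each adjacent pair of endpoints being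
interchanged while all other endpoints are fixed — switching between a configuration with
no mutual intersections (in `G`) and one in which they pairwise intersect (in `G'`).
The signs are in an admissible configuration: the two chords `y, z` share a sign and `x`
carries the opposite sign (this family is exactly the paper's exhibited configuration
together with its modifications by simultaneously reversing the sign and orientation of the
two chords meeting at the head–head vertex, or at the foot–foot vertex, on both sides).
Then every chord of `G`, including `x`, `y` and `z`, has the same parity in `G'` as in `G`. -/
theorem triangle_move_30_preserves_parity
    (G G' : GaussDiagram) (hG : G.Proper) (hG' : G'.Proper)
    (e : Fin G.n → Fin G'.n) (φ : Fin (2 * G.n) → Fin (2 * G'.n))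
    (x y z : Fin G.n) (w₁ w₂ w₃ : Fin (2 * G.n))
    (he : Function.Bijective e) (hφb : Function.Bijective φ) (hφ : CyclicMap φ)
    (hvert : TriangleVertices G x y z w₁ w₂ w₃)
    (hsign : ∀ i, G'.sign (e i) = G.sign i)
    (hother : ∀ i, i ≠ x → i ≠ y → i ≠ z →
      G'.head (e i) = φ (G.head i) ∧ G'.foot (e i) = φ (G.foot i))
    (hslide : (G'.head (e x) = φ (G.head y) ∧ G'.head (e y) = φ (G.head x)) ∧
      (G'.foot (e x) = φ (G.foot z) ∧ G'.foot (e z) = φ (G.foot x)) ∧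
      (G'.foot (e y) = φ (G.head z) ∧ G'.head (e z) = φ (G.foot y)))
    (hadm : G.sign y = G.sign z ∧ G.sign x = -G.sign y)
    (hzero : G.crosses x y = false ∧ G.crosses y z = false ∧ G.crosses x z = false)
    (hthree : G'.crosses (e x) (e y) = true ∧ G'.crosses (e y) (e z) = true ∧
      G'.crosses (e x) (e z) = true) :
    ∀ c, G'.parity (e c) = G.parity c := by
  intro c
  classical
  obtain ⟨hxy, hyz, hxz, hv1, hv2, hv3⟩ := hvert
  have einj := he.injective
  have HH : ∀ {i j : Fin G.n}, i ≠ j → (G.head i).1 ≠ (G.head j).1 :=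
    fun h => head_ne_head G hG h
  have FF : ∀ {i j : Fin G.n}, i ≠ j → (G.foot i).1 ≠ (G.foot j).1 :=
    fun h => foot_ne_foot G hG h
  have HF : ∀ i j : Fin G.n, (G.head i).1 ≠ (G.foot j).1 := head_ne_foot G hG
  -- adjacency of the vertex pairs, in expanded arithmetic form
  have adj1 : ((G.head y).1 = (G.head x).1 + 1 ∨ ((G.head x).1 + 1 = 2 * G.n ∧ (G.head y).1 = 0)) ∨
      ((G.head x).1 = (G.head y).1 + 1 ∨ ((G.head y).1 + 1 = 2 * G.n ∧ (G.head x).1 = 0)) := by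
    apply adj_expand
    rcases hv1 with ⟨h1, h2⟩ | ⟨h1, h2⟩
    · left; rw [h1]; exact h2
    · right; rw [h2]; exact h1
  have adj2 : ((G.foot z).1 = (G.foot x).1 + 1 ∨ ((G.foot x).1 + 1 = 2 * G.n ∧ (G.foot z).1 = 0)) ∨
      ((G.foot x).1 = (G.foot z).1 + 1 ∨ ((G.foot z).1 + 1 = 2 * G.n ∧ (G.foot x).1 = 0)) := by
    apply adj_expand
    rcases hv2 with ⟨h1, h2⟩ | ⟨h1, h2⟩
    · left; rw [h1]; exact h2
    · right; rw [h2]; exact h1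
  have adj3 : ((G.head z).1 = (G.foot y).1 + 1 ∨ ((G.foot y).1 + 1 = 2 * G.n ∧ (G.head z).1 = 0)) ∨
      ((G.foot y).1 = (G.head z).1 + 1 ∨ ((G.head z).1 + 1 = 2 * G.n ∧ (G.foot y).1 = 0)) := by
    apply adj_expand
    rcases hv3 with ⟨h1, h2⟩ | ⟨h1, h2⟩
    · left; rw [h1]; exact h2
    · right; rw [h2]; exact h1
  -- the new endpoint positions, in old coordinates
  have nhx : nhAux G x y z x = (G.head y).1 := by simp [nhAux]
  have nhy : nhAux G x y z y = (G.head x).1 := by simp [nhAux, Ne.symm hxy]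
  have nhz : nhAux G x y z z = (G.foot y).1 := by simp [nhAux, Ne.symm hxz, Ne.symm hyz]
  have nfx : nfAux G x y z x = (G.foot z).1 := by simp [nfAux]
  have nfy : nfAux G x y z y = (G.head z).1 := by simp [nfAux, Ne.symm hxy]
  have nfz : nfAux G x y z z = (G.foot x).1 := by simp [nfAux, Ne.symm hxz, Ne.symm hyz]
  have nho : ∀ i, i ≠ x → i ≠ y → i ≠ z →
      nhAux G x y z i = (G.head i).1 ∧ nfAux G x y z i = (G.foot i).1 := by
    intro i h1 h2 h3; constructor <;> simp [nhAux, nfAux, h1, h2, h3]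
  have nhlt : ∀ j, nhAux G x y z j < 2 * G.n := by
    intro j; unfold nhAux; split_ifs <;> exact (Fin.is_lt _)
  have nflt : ∀ j, nfAux G x y z j < 2 * G.n := by
    intro j; unfold nfAux; split_ifs <;> exact (Fin.is_lt _)
  -- endpoints of the moved chords
  have rep : ∀ j : Fin G.n, ∃ a b : Fin (2 * G.n),
      G'.head (e j) = φ a ∧ G'.foot (e j) = φ b ∧ a.1 = nhAux G x y z j ∧ b.1 = nfAux G x y z j := by
    intro j
    by_cases h1 : j = x
    · rw [h1]; exact ⟨G.head y, G.foot z, hslide.1.1, hslide.2.1.1, nhx.symm, nfx.symm⟩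
    by_cases h2 : j = y
    · rw [h2]; exact ⟨G.head x, G.head z, hslide.1.2, hslide.2.2.1, nhy.symm, nfy.symm⟩
    by_cases h3 : j = z
    · rw [h3]; exact ⟨G.foot y, G.foot x, hslide.2.2.2, hslide.2.1.2, nhz.symm, nfz.symm⟩
    · exact ⟨G.head j, G.foot j, (hother j h1 h2 h3).1, (hother j h1 h2 h3).2,
        ((nho j h1 h2 h3).1).symm, ((nho j h1 h2 h3).2).symm⟩
  have hbne : ∀ i j : Fin G.n, (e i != e j) = (i != j) := by
    intro i j
    by_cases h : i = j
    · subst h; simp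
    · rw [bne_iff_ne.mpr (fun q => h (einj q)), bne_iff_ne.mpr h]
  have CROSS : ∀ j i : Fin G.n, G'.crosses (e j) (e i) =
      ((i != j) && (arc (nhAux G x y z j) (nfAux G x y z j) (nhAux G x y z i) !=
        arc (nhAux G x y z j) (nfAux G x y z j) (nfAux G x y z i))) := by
    intro j i
    obtain ⟨a, b, hja, hjb, hva, hvb⟩ := rep j
    obtain ⟨a', b', hia, hib, hva', hvb'⟩ := rep i
    unfold GaussDiagram.crosses
    rw [hja, hjb, hia, hib, hbne, ← hφ a b a', ← hφ a b b', hva, hvb, hva', hvb']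
  have INTER : ∀ j i : Fin G.n, G'.inter (e j) (e i) =
      (if arc (nhAux G x y z j) (nfAux G x y z j) (nhAux G x y z i) then (1 : ℤ) else -1) := by
    intro j i
    obtain ⟨a, b, hja, hjb, hva, hvb⟩ := rep j
    obtain ⟨a', b', hia, hib, hva', hvb'⟩ := rep i
    unfold GaussDiagram.inter
    rw [hja, hjb, hia, ← hφ a b a', hva, hvb, hva']
  -- arc with moved boundary, at a fresh point
  have ARC : ∀ (j : Fin G.n) (p : ℕ), p < 2 * G.n →
      p ≠ (G.head x).1 → p ≠ (G.head y).1 → p ≠ (G.foot x).1 → p ≠ (G.foot z).1 →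
      p ≠ (G.foot y).1 → p ≠ (G.head z).1 →
      arc (nhAux G x y z j) (nfAux G x y z j) p = arc (G.head j).1 (G.foot j).1 p := by
    intro j p hp p1 p2 p3 p4 p5 p6
    by_cases h1 : j = x
    · rw [h1, nhx, nfx]
      calc arc (G.head y).1 (G.foot z).1 p
          = arc (G.head x).1 (G.foot z).1 p :=
            arc_left (G.head y).2 (G.head x).2 (G.foot z).2 hp adj1.symm
              ((HF y z).symm) ((HF x z).symm) p2 p1
        _ = arc (G.head x).1 (G.foot x).1 p :=
            arc_right (G.head x).2 (G.foot z).2 (G.foot x).2 hp adj2.symm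
              (HF x z) (HF x x) p4 p3
    by_cases h2 : j = y
    · rw [h2, nhy, nfy]
      calc arc (G.head x).1 (G.head z).1 p
          = arc (G.head y).1 (G.head z).1 p :=
            arc_left (G.head x).2 (G.head y).2 (G.head z).2 hp adj1
              (HH (Ne.symm hxz)) (HH (Ne.symm hyz)) p1 p2
        _ = arc (G.head y).1 (G.foot y).1 p :=
            arc_right (G.head y).2 (G.head z).2 (G.foot y).2 hp adj3.symm
              (HH hyz) (HF y y) p6 p5
    by_cases h3 : j = z
    · rw [h3, nhz, nfz]
      calc arc (G.foot y).1 (G.foot x).1 p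
          = arc (G.head z).1 (G.foot x).1 p :=
            arc_left (G.foot y).2 (G.head z).2 (G.foot x).2 hp adj3
              (FF hxy) ((HF z x).symm) p5 p6
        _ = arc (G.head z).1 (G.foot z).1 p :=
            arc_right (G.head z).2 (G.foot x).2 (G.foot z).2 hp adj2
              (HF z x) (HF z z) p3 p4
    · rw [(nho j h1 h2 h3).1, (nho j h1 h2 h3).2]
  -- arc at a moved point, with fresh boundaries
  have PT : ∀ (i : Fin G.n) (a b : ℕ), a < 2 * G.n → b < 2 * G.n →
      a ≠ (G.head x).1 → a ≠ (G.head y).1 → a ≠ (G.foot x).1 → a ≠ (G.foot z).1 →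
      a ≠ (G.foot y).1 → a ≠ (G.head z).1 →
      b ≠ (G.head x).1 → b ≠ (G.head y).1 → b ≠ (G.foot x).1 → b ≠ (G.foot z).1 →
      b ≠ (G.foot y).1 → b ≠ (G.head z).1 →
      arc a b (nhAux G x y z i) = arc a b (G.head i).1 ∧
      arc a b (nfAux G x y z i) = arc a b (G.foot i).1 := by
    intro i a b ha hb a1 a2 a3 a4 a5 a6 b1 b2 b3 b4 b5 b6
    by_cases h1 : i = x
    · rw [h1, nhx, nfx]
      exact ⟨arc_pt ha hb (G.head y).2 (G.head x).2 adj1.symm a2 a1 b2 b1,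
        arc_pt ha hb (G.foot z).2 (G.foot x).2 adj2.symm a4 a3 b4 b3⟩
    by_cases h2 : i = y
    · rw [h2, nhy, nfy]
      exact ⟨arc_pt ha hb (G.head x).2 (G.head y).2 adj1 a1 a2 b1 b2,
        arc_pt ha hb (G.head z).2 (G.foot y).2 adj3.symm a6 a5 b6 b5⟩
    by_cases h3 : i = z
    · rw [h3, nhz, nfz]
      exact ⟨arc_pt ha hb (G.foot y).2 (G.head z).2 adj3 a5 a6 b5 b6,
        arc_pt ha hb (G.foot x).2 (G.foot z).2 adj2 a3 a4 b3 b4⟩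
    · rw [(nho i h1 h2 h3).1, (nho i h1 h2 h3).2]; exact ⟨rfl, rfl⟩
  -- term-by-term equality away from the triangle
  have termEq : ∀ cc i : Fin G.n,
      ((cc ≠ x ∧ cc ≠ y ∧ cc ≠ z) ∨ (i ≠ x ∧ i ≠ y ∧ i ≠ z)) →
      (if G'.crosses (e cc) (e i) then G'.sign (e i) * G'.inter (e cc) (e i) else 0) =
      (if G.crosses cc i then G.sign i * G.inter cc i else 0) := by
    intro cc i hcase
    have key : arc (nhAux G x y z cc) (nfAux G x y z cc) (nhAux G x y z i) =
          arc (G.head cc).1 (G.foot cc).1 (G.head i).1 ∧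
        arc (nhAux G x y z cc) (nfAux G x y z cc) (nfAux G x y z i) =
          arc (G.head cc).1 (G.foot cc).1 (G.foot i).1 := by
      rcases hcase with ⟨h1, h2, h3⟩ | ⟨h1, h2, h3⟩
      · rw [(nho cc h1 h2 h3).1, (nho cc h1 h2 h3).2]
        exact PT i (G.head cc).1 (G.foot cc).1 (G.head cc).2 (G.foot cc).2
          (HH h1) (HH h2) (HF cc x) (HF cc z) (HF cc y) (HH h3)
          ((HF x cc).symm) ((HF y cc).symm) (FF h1) (FF h3) (FF h2) ((HF z cc).symm)
      · rw [(nho i h1 h2 h3).1, (nho i h1 h2 h3).2]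
        exact ⟨ARC cc (G.head i).1 (G.head i).2 (HH h1) (HH h2) (HF i x) (HF i z)
            (HF i y) (HH h3),
          ARC cc (G.foot i).1 (G.foot i).2 ((HF x i).symm) ((HF y i).symm) (FF h1)
            (FF h3) (FF h2) ((HF z i).symm)⟩
    rw [CROSS cc i, INTER cc i, key.1, key.2, hsign i]
    rfl
  have selfzero : ∀ j : Fin G.n,
      ((if G'.crosses (e j) (e j) then G'.sign (e j) * G'.inter (e j) (e j) else 0) -
       (if G.crosses j j then G.sign j * G.inter j j else 0)) = 0 := by
    intro j
    have c1 : G.crosses j j = false := by simp [GaussDiagram.crosses]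
    have c2 : G'.crosses (e j) (e j) = false := by simp [GaussDiagram.crosses]
    rw [c1, c2]; simp
  have reindex : G'.parity (e c) =
      ∑ i : Fin G.n, (if G'.crosses (e c) (e i) then G'.sign (e i) * G'.inter (e c) (e i) else 0) :=
    (Fintype.sum_bijective e he _
      (fun j => if G'.crosses (e c) j then G'.sign j * G'.inter (e c) j else 0)
      (fun _ => rfl)).symm
  rw [reindex]
  unfold GaussDiagram.parity
  have boolswap : ∀ u v w : Bool, v ≠ u → w ≠ u → v = w := by decide
  by_cases hcx : c = x
  · -- c = x : the two exceptional terms come from y and z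
    rw [hcx]
    rw [← sub_eq_zero, ← Finset.sum_sub_distrib]
    have hdrop : ∀ i ∈ (Finset.univ : Finset (Fin G.n)), i ∉ ({y, z} : Finset (Fin G.n)) →
        ((if G'.crosses (e x) (e i) then G'.sign (e i) * G'.inter (e x) (e i) else 0) -
         (if G.crosses x i then G.sign i * G.inter x i else 0)) = 0 := by
      intro i _ hi
      simp only [Finset.mem_insert, Finset.mem_singleton, not_or] at hi
      by_cases hix : i = x
      · subst hix; exact selfzero i
      · rw [termEq x i (Or.inr ⟨hix, hi.1, hi.2⟩), sub_self]
    rw [← Finset.sum_subset (Finset.subset_univ ({y, z} : Finset (Fin G.n))) hdrop,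
      Finset.sum_pair hyz]
    have gy : (if G'.crosses (e x) (e y) then G'.sign (e y) * G'.inter (e x) (e y) else 0)
        = G.sign y * (if arc (G.head y).1 (G.foot z).1 (G.head x).1 then (1 : ℤ) else -1) := by
      rw [if_pos hthree.1, hsign y, INTER x y, nhx, nfx, nhy]
    have gz : (if G'.crosses (e x) (e z) then G'.sign (e z) * G'.inter (e x) (e z) else 0)
        = G.sign z * (if arc (G.head y).1 (G.foot z).1 (G.foot y).1 then (1 : ℤ) else -1) := by
      rw [if_pos hthree.2.2, hsign z, INTER x z, nhx, nfx, nhz]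
    have fy0 : (if G.crosses x y then G.sign y * G.inter x y else 0) = 0 := by
      rw [hzero.1]; simp
    have fz0 : (if G.crosses x z then G.sign z * G.inter x z else 0) = 0 := by
      rw [hzero.2.2]; simp
    rw [gy, gz, fy0, fz0, sub_zero, sub_zero]
    have h1 : (arc (nhAux G x y z x) (nfAux G x y z x) (nhAux G x y z y) !=
        arc (nhAux G x y z x) (nfAux G x y z x) (nfAux G x y z y)) = true := by
      have h := hthree.1
      rw [CROSS x y] at h
      exact (Bool.and_eq_true_iff.mp h).2
    rw [nhx, nfx, nhy, nfy] at h1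
    have h2 : arc (G.head y).1 (G.foot z).1 (G.head z).1 =
        arc (G.head y).1 (G.foot z).1 (G.foot y).1 :=
      arc_pt (G.head y).2 (G.foot z).2 (G.head z).2 (G.foot y).2 adj3.symm
        (HH hyz) (HF y y) ((HF z z).symm) (FF (Ne.symm hyz))
    have h3 : arc (G.head y).1 (G.foot z).1 (G.head x).1 ≠
        arc (G.head y).1 (G.foot z).1 (G.foot y).1 := by
      rw [← h2]; exact bne_iff_ne.mp h1
    rw [← hadm.1]
    cases hB : arc (G.head y).1 (G.foot z).1 (G.foot y).1
    · have hA : arc (G.head y).1 (G.foot z).1 (G.head x).1 = true := by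
        cases hq : arc (G.head y).1 (G.foot z).1 (G.head x).1
        · exact absurd (hq.trans hB.symm) h3
        · rfl
      rw [hA]
      simp
    · have hA : arc (G.head y).1 (G.foot z).1 (G.head x).1 = false := by
        cases hq : arc (G.head y).1 (G.foot z).1 (G.head x).1
        · rfl
        · exact absurd (hq.trans hB.symm) h3
      rw [hA]
      simp
  by_cases hcy : c = y
  · -- c = y : the two exceptional terms come from x and z
    rw [hcy]
    rw [← sub_eq_zero, ← Finset.sum_sub_distrib]
    have hdrop : ∀ i ∈ (Finset.univ : Finset (Fin G.n)), i ∉ ({x, z} : Finset (Fin G.n)) →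
        ((if G'.crosses (e y) (e i) then G'.sign (e i) * G'.inter (e y) (e i) else 0) -
         (if G.crosses y i then G.sign i * G.inter y i else 0)) = 0 := by
      intro i _ hi
      simp only [Finset.mem_insert, Finset.mem_singleton, not_or] at hi
      by_cases hiy : i = y
      · subst hiy; exact selfzero i
      · rw [termEq y i (Or.inr ⟨hi.1, hiy, hi.2⟩), sub_self]
    rw [← Finset.sum_subset (Finset.subset_univ ({x, z} : Finset (Fin G.n))) hdrop,
      Finset.sum_pair hxz]
    have cyx : G'.crosses (e y) (e x) = true := by
      rw [crosses_symm G' hG' (e y) (e x)]; exact hthree.1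
    have gx : (if G'.crosses (e y) (e x) then G'.sign (e x) * G'.inter (e y) (e x) else 0)
        = G.sign x * (if arc (G.head x).1 (G.head z).1 (G.head y).1 then (1 : ℤ) else -1) := by
      rw [if_pos cyx, hsign x, INTER y x, nhy, nfy, nhx]
    have gz : (if G'.crosses (e y) (e z) then G'.sign (e z) * G'.inter (e y) (e z) else 0)
        = G.sign z * (if arc (G.head x).1 (G.head z).1 (G.foot y).1 then (1 : ℤ) else -1) := by
      rw [if_pos hthree.2.1, hsign z, INTER y z, nhy, nfy, nhz]
    have fx0 : (if G.crosses y x then G.sign x * G.inter y x else 0) = 0 := by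
      rw [crosses_symm G hG y x, hzero.1]; simp
    have fz0 : (if G.crosses y z then G.sign z * G.inter y z else 0) = 0 := by
      rw [hzero.2.1]; simp
    rw [gx, gz, fx0, fz0, sub_zero, sub_zero]
    have h1 : (arc (nhAux G x y z y) (nfAux G x y z y) (nhAux G x y z x) !=
        arc (nhAux G x y z y) (nfAux G x y z y) (nfAux G x y z x)) = true := by
      have h := cyx
      rw [CROSS y x] at h
      exact (Bool.and_eq_true_iff.mp h).2
    rw [nhy, nfy, nhx, nfx] at h1
    have h1' : (arc (nhAux G x y z y) (nfAux G x y z y) (nhAux G x y z z) !=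
        arc (nhAux G x y z y) (nfAux G x y z y) (nfAux G x y z z)) = true := by
      have h := hthree.2.1
      rw [CROSS y z] at h
      exact (Bool.and_eq_true_iff.mp h).2
    rw [nhy, nfy, nhz, nfz] at h1'
    have h2 : arc (G.head x).1 (G.head z).1 (G.foot z).1 =
        arc (G.head x).1 (G.head z).1 (G.foot x).1 :=
      arc_pt (G.head x).2 (G.head z).2 (G.foot z).2 (G.foot x).2 adj2.symm
        (HF x z) (HF x x) (HF z z) (HF z x)
    have hAB : arc (G.head x).1 (G.head z).1 (G.head y).1 =
        arc (G.head x).1 (G.head z).1 (G.foot y).1 := by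
      have n1 := bne_iff_ne.mp h1
      have n2 := bne_iff_ne.mp h1'
      rw [h2] at n1
      exact boolswap _ _ _ n1 n2
    rw [hadm.2, ← hadm.1, hAB]
    ring
  by_cases hcz : c = z
  · -- c = z : the two exceptional terms come from x and y
    rw [hcz]
    rw [← sub_eq_zero, ← Finset.sum_sub_distrib]
    have hdrop : ∀ i ∈ (Finset.univ : Finset (Fin G.n)), i ∉ ({x, y} : Finset (Fin G.n)) →
        ((if G'.crosses (e z) (e i) then G'.sign (e i) * G'.inter (e z) (e i) else 0) -
         (if G.crosses z i then G.sign i * G.inter z i else 0)) = 0 := by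
      intro i _ hi
      simp only [Finset.mem_insert, Finset.mem_singleton, not_or] at hi
      by_cases hiz : i = z
      · subst hiz; exact selfzero i
      · rw [termEq z i (Or.inr ⟨hi.1, hi.2, hiz⟩), sub_self]
    rw [← Finset.sum_subset (Finset.subset_univ ({x, y} : Finset (Fin G.n))) hdrop,
      Finset.sum_pair hxy]
    have czx : G'.crosses (e z) (e x) = true := by
      rw [crosses_symm G' hG' (e z) (e x)]; exact hthree.2.2
    have czy : G'.crosses (e z) (e y) = true := by
      rw [crosses_symm G' hG' (e z) (e y)]; exact hthree.2.1
    have gx : (if G'.crosses (e z) (e x) then G'.sign (e x) * G'.inter (e z) (e x) else 0)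
        = G.sign x * (if arc (G.foot y).1 (G.foot x).1 (G.head y).1 then (1 : ℤ) else -1) := by
      rw [if_pos czx, hsign x, INTER z x, nhz, nfz, nhx]
    have gy : (if G'.crosses (e z) (e y) then G'.sign (e y) * G'.inter (e z) (e y) else 0)
        = G.sign y * (if arc (G.foot y).1 (G.foot x).1 (G.head x).1 then (1 : ℤ) else -1) := by
      rw [if_pos czy, hsign y, INTER z y, nhz, nfz, nhy]
    have fx0 : (if G.crosses z x then G.sign x * G.inter z x else 0) = 0 := by
      rw [crosses_symm G hG z x, hzero.2.2]; simp
    have fy0 : (if G.crosses z y then G.sign y * G.inter z y else 0) = 0 := by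
      rw [crosses_symm G hG z y, hzero.2.1]; simp
    rw [gx, gy, fx0, fy0, sub_zero, sub_zero]
    have hAB : arc (G.foot y).1 (G.foot x).1 (G.head y).1 =
        arc (G.foot y).1 (G.foot x).1 (G.head x).1 :=
      arc_pt (G.foot y).2 (G.foot x).2 (G.head y).2 (G.head x).2 adj1.symm
        ((HF y y).symm) ((HF x y).symm) ((HF y x).symm) ((HF x x).symm)
    rw [hadm.2, hAB]
    ring
  · -- generic chord
    exact Finset.sum_congr rfl (fun i _ => termEq c i (Or.inl ⟨hcx, hcy, hcz⟩))
end

section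
/- Let i be a non-zero integer. If two Gauss diagrams G and G' are related by a single chord move, a two chord move, or a triangle move (and hence if they are related by any finite sequence of chord moves), then |A_i(G)| = |A_i(G')|. -/
lemma arc_iff (a b p : ℕ) :
    arc a b p = true ↔ ((a < b ∧ a < p ∧ p < b) ∨ (¬ a < b ∧ (p < b ∨ a < p))) := by
  unfold arc; split_ifs with h <;> simp [h]

lemma arc_false_iff (a b p : ℕ) :
    arc a b p = false ↔ ¬((a < b ∧ a < p ∧ p < b) ∨ (¬ a < b ∧ (p < b ∨ a < p))) := by
  rw [← arc_iff]; simp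

-- adjacency expansion
lemma adj_expand_s7 {m u v : ℕ} (hu : u < m) (huv : v = (u+1) % m) :
    (v = u + 1 ∧ u + 1 < m) ∨ (u + 1 = m ∧ v = 0) := by
  rcases Nat.lt_or_ge (u+1) m with h | h
  · exact Or.inl ⟨by rw [huv, Nat.mod_eq_of_lt h], h⟩
  · have hm : u + 1 = m := by omega
    exact Or.inr ⟨hm, by rw [huv, hm, Nat.mod_self]⟩

lemma arc_third_adj {m a b u v : ℕ} (ha : a < m) (hb : b < m) (hu : u < m)
    (huv : v = (u+1) % m) (h1 : a ≠ u) (h2 : a ≠ v) (h3 : b ≠ u) (h4 : b ≠ v) :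
    arc a b u = arc a b v := by
  have h := adj_expand_s7 hu huv
  rw [Bool.eq_iff_iff, arc_iff, arc_iff]; omega
lemma arc_fst_adj {m u v b p : ℕ} (hu : u < m) (hb : b < m) (hp : p < m)
    (huv : v = (u+1) % m) (h1 : b ≠ u) (h2 : b ≠ v) (h3 : p ≠ u) (h4 : p ≠ v) :
    arc u b p = arc v b p := by
  have h := adj_expand_s7 hu huv
  rw [Bool.eq_iff_iff, arc_iff, arc_iff]; omega

lemma arc_snd_adj {m u v a p : ℕ} (hu : u < m) (ha : a < m) (hp : p < m)
    (huv : v = (u+1) % m) (h1 : a ≠ u) (h2 : a ≠ v) (h3 : p ≠ u) (h4 : p ≠ v) :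
    arc a u p = arc a v p := by
  have h := adj_expand_s7 hu huv
  rw [Bool.eq_iff_iff, arc_iff, arc_iff]; omega

lemma arc_succ_false {m u v p : ℕ} (hu : u < m) (hp : p < m)
    (huv : v = (u+1) % m) (hne : u ≠ v) : arc u v p = false := by
  have h := adj_expand_s7 hu huv
  rw [arc_false_iff]; omega

lemma arc_pred_true {m u v p : ℕ} (hv : v < m) (hp : p < m)
    (huv : u = (v+1) % m) (h1 : p ≠ u) (h2 : p ≠ v) : arc u v p = true := by
  have h := adj_expand_s7 hv huv
  rw [arc_iff]; omega

lemma cross_symmN {a b p q : ℕ} (h1 : a ≠ b) (h2 : a ≠ p) (h3 : a ≠ q)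
    (h4 : b ≠ p) (h5 : b ≠ q) (h6 : p ≠ q) :
    (arc a b p != arc a b q) = (arc p q a != arc p q b) := by
  cases e1 : arc a b p <;> cases e2 : arc a b q <;> cases e3 : arc p q a <;>
    cases e4 : arc p q b <;>
      simp_all only [arc_iff, arc_false_iff, bne_self_eq_false, Bool.bne_true,
        Bool.bne_false, Bool.true_bne, Bool.false_bne, Bool.not_true, Bool.not_false] <;>
      omega

lemma inter_antisymN {a b p q : ℕ} (h1 : a ≠ b) (h2 : a ≠ p) (h3 : a ≠ q)
    (h4 : b ≠ p) (h5 : b ≠ q) (h6 : p ≠ q) (hc : arc a b p ≠ arc a b q) :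
    arc p q a = !(arc a b p) := by
  cases e1 : arc a b p <;> cases e2 : arc a b q <;> cases e3 : arc p q a <;>
      simp_all only [arc_iff, arc_false_iff, Bool.not_true, Bool.not_false, ne_eq,
        not_true_eq_false, not_false_eq_true] <;>
    first
    | rfl
    | omega

/-- Contribution to the parity of the chord `(a, b)` of another chord with head `p` and
foot `q` and sign `s`. -/
def termN (a b p q : ℕ) (s : ℤ) : ℤ :=
  if arc a b p != arc a b q then s * (if arc a b p then 1 else -1) else 0

set_option linter.unusedVariables false
set_option maxHeartbeats 1000000

lemma R1 {m hx fx hy fy hz fz : ℕ}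
    (bhx : hx < m) (bfx : fx < m) (bhy : hy < m) (bfy : fy < m) (bhz : hz < m) (bfz : fz < m)
    (dhxfx : hx ≠ fx) (dhxhy : hx ≠ hy) (dhxfy : hx ≠ fy) (dhxhz : hx ≠ hz) (dhxfz : hx ≠ fz) (dfxhy : fx ≠ hy) (dfxfy : fx ≠ fy) (dfxhz : fx ≠ hz) (dfxfz : fx ≠ fz) (dhyfy : hy ≠ fy) (dhyhz : hy ≠ hz) (dhyfz : hy ≠ fz) (dfyhz : fy ≠ hz) (dfyfz : fy ≠ fz) (dhzfz : hz ≠ fz)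
    (E3 : (hz = fy+1 ∧ fy+1 < m) ∨ (fy+1 = m ∧ hz = 0) ∨ (fy = hz+1 ∧ hz+1 < m) ∨ (hz+1 = m ∧ fy = 0)) :
    arc hx fx hz = arc hx fx fy := by
  cases e : arc hx fx fy <;>
    simp only [arc_iff, arc_false_iff, Bool.not_true, Bool.not_false] at e ⊢ <;> omega

lemma R2 {m hx fx hy fy hz fz : ℕ}
    (bhx : hx < m) (bfx : fx < m) (bhy : hy < m) (bfy : fy < m) (bhz : hz < m) (bfz : fz < m)
    (dhxfx : hx ≠ fx) (dhxhy : hx ≠ hy) (dhxfy : hx ≠ fy) (dhxhz : hx ≠ hz) (dhxfz : hx ≠ fz) (dfxhy : fx ≠ hy) (dfxfy : fx ≠ fy) (dfxhz : fx ≠ hz) (dfxfz : fx ≠ fz) (dhyfy : hy ≠ fy) (dhyhz : hy ≠ hz) (dhyfz : hy ≠ fz) (dfyhz : fy ≠ hz) (dfyfz : fy ≠ fz) (dhzfz : hz ≠ fz)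
    (E2 : (fz = fx+1 ∧ fx+1 < m) ∨ (fx+1 = m ∧ fz = 0) ∨ (fx = fz+1 ∧ fz+1 < m) ∨ (fz+1 = m ∧ fx = 0)) :
    arc hx fx fz = !arc hz fz fx := by
  cases e : arc hz fz fx <;>
    simp only [arc_iff, arc_false_iff, Bool.not_true, Bool.not_false] at e ⊢ <;> omega

lemma R3 {m hx fx hy fy hz fz : ℕ}
    (bhx : hx < m) (bfx : fx < m) (bhy : hy < m) (bfy : fy < m) (bhz : hz < m) (bfz : fz < m)
    (dhxfx : hx ≠ fx) (dhxhy : hx ≠ hy) (dhxfy : hx ≠ fy) (dhxhz : hx ≠ hz) (dhxfz : hx ≠ fz) (dfxhy : fx ≠ hy) (dfxfy : fx ≠ fy) (dfxhz : fx ≠ hz) (dfxfz : fx ≠ fz) (dhyfy : hy ≠ fy) (dhyhz : hy ≠ hz) (dhyfz : hy ≠ fz) (dfyhz : fy ≠ hz) (dfyfz : fy ≠ fz) (dhzfz : hz ≠ fz)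
    (E1 : (hy = hx+1 ∧ hx+1 < m) ∨ (hx+1 = m ∧ hy = 0) ∨ (hx = hy+1 ∧ hy+1 < m) ∨ (hy+1 = m ∧ hx = 0)) :
    arc hy fy hx = !arc hx fx hy := by
  cases e : arc hx fx hy <;>
    simp only [arc_iff, arc_false_iff, Bool.not_true, Bool.not_false] at e ⊢ <;> omega

lemma R4 {m hx fx hy fy hz fz : ℕ}
    (bhx : hx < m) (bfx : fx < m) (bhy : hy < m) (bfy : fy < m) (bhz : hz < m) (bfz : fz < m)
    (dhxfx : hx ≠ fx) (dhxhy : hx ≠ hy) (dhxfy : hx ≠ fy) (dhxhz : hx ≠ hz) (dhxfz : hx ≠ fz) (dfxhy : fx ≠ hy) (dfxfy : fx ≠ fy) (dfxhz : fx ≠ hz) (dfxfz : fx ≠ fz) (dhyfy : hy ≠ fy) (dhyhz : hy ≠ hz) (dhyfz : hy ≠ fz) (dfyhz : fy ≠ hz) (dfyfz : fy ≠ fz) (dhzfz : hz ≠ fz)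
    (E1 : (hy = hx+1 ∧ hx+1 < m) ∨ (hx+1 = m ∧ hy = 0) ∨ (hx = hy+1 ∧ hy+1 < m) ∨ (hy+1 = m ∧ hx = 0)) :
    arc hy fy fx = !arc hx fx fy := by
  cases e : arc hx fx fy <;>
    simp only [arc_iff, arc_false_iff, Bool.not_true, Bool.not_false] at e ⊢ <;> omega

lemma R6 {m hx fx hy fy hz fz : ℕ}
    (bhx : hx < m) (bfx : fx < m) (bhy : hy < m) (bfy : fy < m) (bhz : hz < m) (bfz : fz < m)
    (dhxfx : hx ≠ fx) (dhxhy : hx ≠ hy) (dhxfy : hx ≠ fy) (dhxhz : hx ≠ hz) (dhxfz : hx ≠ fz) (dfxhy : fx ≠ hy) (dfxfy : fx ≠ fy) (dfxhz : fx ≠ hz) (dfxfz : fx ≠ fz) (dhyfy : hy ≠ fy) (dhyhz : hy ≠ hz) (dhyfz : hy ≠ fz) (dfyhz : fy ≠ hz) (dfyfz : fy ≠ fz) (dhzfz : hz ≠ fz)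
    (E2 : (fz = fx+1 ∧ fx+1 < m) ∨ (fx+1 = m ∧ fz = 0) ∨ (fx = fz+1 ∧ fz+1 < m) ∨ (fz+1 = m ∧ fx = 0)) (E3 : (hz = fy+1 ∧ fy+1 < m) ∨ (fy+1 = m ∧ hz = 0) ∨ (fy = hz+1 ∧ hz+1 < m) ∨ (hz+1 = m ∧ fy = 0)) :
    arc hz fz hx = !arc hx fx fy := by
  cases e : arc hx fx fy <;>
    simp only [arc_iff, arc_false_iff, Bool.not_true, Bool.not_false] at e ⊢ <;> omega

lemma R8 {m hx fx hy fy hz fz : ℕ}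
    (bhx : hx < m) (bfx : fx < m) (bhy : hy < m) (bfy : fy < m) (bhz : hz < m) (bfz : fz < m)
    (dhxfx : hx ≠ fx) (dhxhy : hx ≠ hy) (dhxfy : hx ≠ fy) (dhxhz : hx ≠ hz) (dhxfz : hx ≠ fz) (dfxhy : fx ≠ hy) (dfxfy : fx ≠ fy) (dfxhz : fx ≠ hz) (dfxfz : fx ≠ fz) (dhyfy : hy ≠ fy) (dhyhz : hy ≠ hz) (dhyfz : hy ≠ fz) (dfyhz : fy ≠ hz) (dfyfz : fy ≠ fz) (dhzfz : hz ≠ fz)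
    (E3 : (hz = fy+1 ∧ fy+1 < m) ∨ (fy+1 = m ∧ hz = 0) ∨ (fy = hz+1 ∧ hz+1 < m) ∨ (hz+1 = m ∧ fy = 0)) :
    arc hz fz fy = arc hy fy hz := by
  cases e : arc hy fy hz <;>
    simp only [arc_iff, arc_false_iff, Bool.not_true, Bool.not_false] at e ⊢ <;> omega

lemma R9 {m hx fx hy fy hz fz : ℕ}
    (bhx : hx < m) (bfx : fx < m) (bhy : hy < m) (bfy : fy < m) (bhz : hz < m) (bfz : fz < m)
    (dhxfx : hx ≠ fx) (dhxhy : hx ≠ hy) (dhxfy : hx ≠ fy) (dhxhz : hx ≠ hz) (dhxfz : hx ≠ fz) (dfxhy : fx ≠ hy) (dfxfy : fx ≠ fy) (dfxhz : fx ≠ hz) (dfxfz : fx ≠ fz) (dhyfy : hy ≠ fy) (dhyhz : hy ≠ hz) (dhyfz : hy ≠ fz) (dfyhz : fy ≠ hz) (dfyfz : fy ≠ fz) (dhzfz : hz ≠ fz)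
    (E1 : (hy = hx+1 ∧ hx+1 < m) ∨ (hx+1 = m ∧ hy = 0) ∨ (hx = hy+1 ∧ hy+1 < m) ∨ (hy+1 = m ∧ hx = 0)) :
    arc hy fz hx = !arc hx fx hy := by
  cases e : arc hx fx hy <;>
    simp only [arc_iff, arc_false_iff, Bool.not_true, Bool.not_false] at e ⊢ <;> omega

lemma R11 {m hx fx hy fy hz fz : ℕ}
    (bhx : hx < m) (bfx : fx < m) (bhy : hy < m) (bfy : fy < m) (bhz : hz < m) (bfz : fz < m)
    (dhxfx : hx ≠ fx) (dhxhy : hx ≠ hy) (dhxfy : hx ≠ fy) (dhxhz : hx ≠ hz) (dhxfz : hx ≠ fz) (dfxhy : fx ≠ hy) (dfxfy : fx ≠ fy) (dfxhz : fx ≠ hz) (dfxfz : fx ≠ fz) (dhyfy : hy ≠ fy) (dhyhz : hy ≠ hz) (dhyfz : hy ≠ fz) (dfyhz : fy ≠ hz) (dfyfz : fy ≠ fz) (dhzfz : hz ≠ fz)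
    (E1 : (hy = hx+1 ∧ hx+1 < m) ∨ (hx+1 = m ∧ hy = 0) ∨ (hx = hy+1 ∧ hy+1 < m) ∨ (hy+1 = m ∧ hx = 0)) (E2 : (fz = fx+1 ∧ fx+1 < m) ∨ (fx+1 = m ∧ fz = 0) ∨ (fx = fz+1 ∧ fz+1 < m) ∨ (fz+1 = m ∧ fx = 0)) :
    arc hy fz fy = arc hx fx fy := by
  cases e : arc hx fx fy <;>
    simp only [arc_iff, arc_false_iff, Bool.not_true, Bool.not_false] at e ⊢ <;> omega

lemma R12 {m hx fx hy fy hz fz : ℕ}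
    (bhx : hx < m) (bfx : fx < m) (bhy : hy < m) (bfy : fy < m) (bhz : hz < m) (bfz : fz < m)
    (dhxfx : hx ≠ fx) (dhxhy : hx ≠ hy) (dhxfy : hx ≠ fy) (dhxhz : hx ≠ hz) (dhxfz : hx ≠ fz) (dfxhy : fx ≠ hy) (dfxfy : fx ≠ fy) (dfxhz : fx ≠ hz) (dfxfz : fx ≠ fz) (dhyfy : hy ≠ fy) (dhyhz : hy ≠ hz) (dhyfz : hy ≠ fz) (dfyhz : fy ≠ hz) (dfyfz : fy ≠ fz) (dhzfz : hz ≠ fz)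
    (E2 : (fz = fx+1 ∧ fx+1 < m) ∨ (fx+1 = m ∧ fz = 0) ∨ (fx = fz+1 ∧ fz+1 < m) ∨ (fz+1 = m ∧ fx = 0)) :
    arc hy fz fx = arc hz fz fx := by
  cases e : arc hz fz fx <;>
    simp only [arc_iff, arc_false_iff, Bool.not_true, Bool.not_false] at e ⊢ <;> omega

lemma R13 {m hx fx hy fy hz fz : ℕ}
    (bhx : hx < m) (bfx : fx < m) (bhy : hy < m) (bfy : fy < m) (bhz : hz < m) (bfz : fz < m)
    (dhxfx : hx ≠ fx) (dhxhy : hx ≠ hy) (dhxfy : hx ≠ fy) (dhxhz : hx ≠ hz) (dhxfz : hx ≠ fz) (dfxhy : fx ≠ hy) (dfxfy : fx ≠ fy) (dfxhz : fx ≠ hz) (dfxfz : fx ≠ fz) (dhyfy : hy ≠ fy) (dhyhz : hy ≠ hz) (dhyfz : hy ≠ fz) (dfyhz : fy ≠ hz) (dfyfz : fy ≠ fz) (dhzfz : hz ≠ fz)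
    (E1 : (hy = hx+1 ∧ hx+1 < m) ∨ (hx+1 = m ∧ hy = 0) ∨ (hx = hy+1 ∧ hy+1 < m) ∨ (hy+1 = m ∧ hx = 0)) :
    arc hx hz hy = arc hx fx hy := by
  cases e : arc hx fx hy <;>
    simp only [arc_iff, arc_false_iff, Bool.not_true, Bool.not_false] at e ⊢ <;> omega

lemma R15 {m hx fx hy fy hz fz : ℕ}
    (bhx : hx < m) (bfx : fx < m) (bhy : hy < m) (bfy : fy < m) (bhz : hz < m) (bfz : fz < m)
    (dhxfx : hx ≠ fx) (dhxhy : hx ≠ hy) (dhxfy : hx ≠ fy) (dhxhz : hx ≠ hz) (dhxfz : hx ≠ fz) (dfxhy : fx ≠ hy) (dfxfy : fx ≠ fy) (dfxhz : fx ≠ hz) (dfxfz : fx ≠ fz) (dhyfy : hy ≠ fy) (dhyhz : hy ≠ hz) (dhyfz : hy ≠ fz) (dfyhz : fy ≠ hz) (dfyfz : fy ≠ fz) (dhzfz : hz ≠ fz)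
    (E3 : (hz = fy+1 ∧ fy+1 < m) ∨ (fy+1 = m ∧ hz = 0) ∨ (fy = hz+1 ∧ hz+1 < m) ∨ (hz+1 = m ∧ fy = 0)) :
    arc hx hz fy = !arc hy fy hz := by
  cases e : arc hy fy hz <;>
    simp only [arc_iff, arc_false_iff, Bool.not_true, Bool.not_false] at e ⊢ <;> omega

lemma R16 {m hx fx hy fy hz fz : ℕ}
    (bhx : hx < m) (bfx : fx < m) (bhy : hy < m) (bfy : fy < m) (bhz : hz < m) (bfz : fz < m)
    (dhxfx : hx ≠ fx) (dhxhy : hx ≠ hy) (dhxfy : hx ≠ fy) (dhxhz : hx ≠ hz) (dhxfz : hx ≠ fz) (dfxhy : fx ≠ hy) (dfxfy : fx ≠ fy) (dfxhz : fx ≠ hz) (dfxfz : fx ≠ fz) (dhyfy : hy ≠ fy) (dhyhz : hy ≠ hz) (dhyfz : hy ≠ fz) (dfyhz : fy ≠ hz) (dfyfz : fy ≠ fz) (dhzfz : hz ≠ fz)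
    (E1 : (hy = hx+1 ∧ hx+1 < m) ∨ (hx+1 = m ∧ hy = 0) ∨ (hx = hy+1 ∧ hy+1 < m) ∨ (hy+1 = m ∧ hx = 0)) (E3 : (hz = fy+1 ∧ fy+1 < m) ∨ (fy+1 = m ∧ hz = 0) ∨ (fy = hz+1 ∧ hz+1 < m) ∨ (hz+1 = m ∧ fy = 0)) :
    arc hx hz fx = !arc hx fx fy := by
  cases e : arc hx fx fy <;>
    simp only [arc_iff, arc_false_iff, Bool.not_true, Bool.not_false] at e ⊢ <;> omega

lemma R17 {m hx fx hy fy hz fz : ℕ}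
    (bhx : hx < m) (bfx : fx < m) (bhy : hy < m) (bfy : fy < m) (bhz : hz < m) (bfz : fz < m)
    (dhxfx : hx ≠ fx) (dhxhy : hx ≠ hy) (dhxfy : hx ≠ fy) (dhxhz : hx ≠ hz) (dhxfz : hx ≠ fz) (dfxhy : fx ≠ hy) (dfxfy : fx ≠ fy) (dfxhz : fx ≠ hz) (dfxfz : fx ≠ fz) (dhyfy : hy ≠ fy) (dhyhz : hy ≠ hz) (dhyfz : hy ≠ fz) (dfyhz : fy ≠ hz) (dfyfz : fy ≠ fz) (dhzfz : hz ≠ fz)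
    (E3 : (hz = fy+1 ∧ fy+1 < m) ∨ (fy+1 = m ∧ hz = 0) ∨ (fy = hz+1 ∧ hz+1 < m) ∨ (hz+1 = m ∧ fy = 0)) :
    arc fy fx hz = !arc hy fy hz := by
  cases e : arc hy fy hz <;>
    simp only [arc_iff, arc_false_iff, Bool.not_true, Bool.not_false] at e ⊢ <;> omega

lemma R18 {m hx fx hy fy hz fz : ℕ}
    (bhx : hx < m) (bfx : fx < m) (bhy : hy < m) (bfy : fy < m) (bhz : hz < m) (bfz : fz < m)
    (dhxfx : hx ≠ fx) (dhxhy : hx ≠ hy) (dhxfy : hx ≠ fy) (dhxhz : hx ≠ hz) (dhxfz : hx ≠ fz) (dfxhy : fx ≠ hy) (dfxfy : fx ≠ fy) (dfxhz : fx ≠ hz) (dfxfz : fx ≠ fz) (dhyfy : hy ≠ fy) (dhyhz : hy ≠ hz) (dhyfz : hy ≠ fz) (dfyhz : fy ≠ hz) (dfyfz : fy ≠ fz) (dhzfz : hz ≠ fz)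
    (E2 : (fz = fx+1 ∧ fx+1 < m) ∨ (fx+1 = m ∧ fz = 0) ∨ (fx = fz+1 ∧ fz+1 < m) ∨ (fz+1 = m ∧ fx = 0)) :
    arc fy fx fz = !arc hz fz fx := by
  cases e : arc hz fz fx <;>
    simp only [arc_iff, arc_false_iff, Bool.not_true, Bool.not_false] at e ⊢ <;> omega

lemma R20 {m hx fx hy fy hz fz : ℕ}
    (bhx : hx < m) (bfx : fx < m) (bhy : hy < m) (bfy : fy < m) (bhz : hz < m) (bfz : fz < m)
    (dhxfx : hx ≠ fx) (dhxhy : hx ≠ hy) (dhxfy : hx ≠ fy) (dhxhz : hx ≠ hz) (dhxfz : hx ≠ fz) (dfxhy : fx ≠ hy) (dfxfy : fx ≠ fy) (dfxhz : fx ≠ hz) (dfxfz : fx ≠ fz) (dhyfy : hy ≠ fy) (dhyhz : hy ≠ hz) (dhyfz : hy ≠ fz) (dfyhz : fy ≠ hz) (dfyfz : fy ≠ fz) (dhzfz : hz ≠ fz)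
    (E2 : (fz = fx+1 ∧ fx+1 < m) ∨ (fx+1 = m ∧ fz = 0) ∨ (fx = fz+1 ∧ fz+1 < m) ∨ (fz+1 = m ∧ fx = 0)) (E3 : (hz = fy+1 ∧ fy+1 < m) ∨ (fy+1 = m ∧ hz = 0) ∨ (fy = hz+1 ∧ hz+1 < m) ∨ (hz+1 = m ∧ fy = 0)) :
    arc fy fx hx = !arc hx fx fy := by
  cases e : arc hx fx fy <;>
    simp only [arc_iff, arc_false_iff, Bool.not_true, Bool.not_false] at e ⊢ <;> omega


set_option maxHeartbeats 4000000 in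
/-- The core computation for the triangle move: the mutual parity contributions of the
three chords of the triangle are preserved. -/
lemma tri_core {m hx fx hy fy hz fz : ℕ}
    (bhx : hx < m) (bfx : fx < m) (bhy : hy < m) (bfy : fy < m) (bhz : hz < m) (bfz : fz < m)
    (dhxfx : hx ≠ fx) (dhxhy : hx ≠ hy) (dhxfy : hx ≠ fy) (dhxhz : hx ≠ hz) (dhxfz : hx ≠ fz)
    (dfxhy : fx ≠ hy) (dfxfy : fx ≠ fy) (dfxhz : fx ≠ hz) (dfxfz : fx ≠ fz)
    (dhyfy : hy ≠ fy) (dhyhz : hy ≠ hz) (dhyfz : hy ≠ fz)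
    (dfyhz : fy ≠ hz) (dfyfz : fy ≠ fz) (dhzfz : hz ≠ fz)
    (a1 : hy = (hx+1) % m ∨ hx = (hy+1) % m)
    (a2 : fz = (fx+1) % m ∨ fx = (fz+1) % m)
    (a3 : hz = (fy+1) % m ∨ fy = (hz+1) % m)
    (sx sy sz : ℤ)
    (adm :
      (((arc hx fx hy != arc hx fx fy) = false ∧ (arc hy fy hz != arc hy fy fz) = false ∧
          (arc hx fx hz != arc hx fx fz) = false) ∨
        ((arc hy fz hx != arc hy fz hz) = false ∧ (arc hx hz fy != arc hx hz fx) = false ∧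
          (arc hy fz fy != arc hy fz fx) = false)) ∧ sy = sz ∧ sx = -sy ∨
      (((arc hx fx hy != arc hx fx fy) = true ∧ (arc hy fy hz != arc hy fy fz) = false ∧
          (arc hx fx hz != arc hx fx fz) = false) ∨
        ((arc hy fz hx != arc hy fz hz) = true ∧ (arc hx hz fy != arc hx hz fx) = false ∧
          (arc hy fz fy != arc hy fz fx) = false)) ∧ sy = -sx ∧ sz = sx ∨
      (((arc hx fx hz != arc hx fx fz) = true ∧ (arc hx fx hy != arc hx fx fy) = false ∧
          (arc hy fy hz != arc hy fy fz) = false) ∨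
        ((arc hy fz fy != arc hy fz fx) = true ∧ (arc hy fz hx != arc hy fz hz) = false ∧
          (arc hx hz fy != arc hx hz fx) = false)) ∧ sz = -sx ∧ sy = sx ∨
      (((arc hy fy hz != arc hy fy fz) = true ∧ (arc hx fx hy != arc hx fx fy) = false ∧
          (arc hx fx hz != arc hx fx fz) = false) ∨
        ((arc hx hz fy != arc hx hz fx) = true ∧ (arc hy fz hx != arc hy fz hz) = false ∧
          (arc hy fz fy != arc hy fz fx) = false)) ∧ sy = sx ∧ sz = sx) :
    termN hx fx hy fy sy + termN hx fx hz fz sz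
        = termN hy fz hx hz sy + termN hy fz fy fx sz ∧
      termN hy fy hx fx sx + termN hy fy hz fz sz
        = termN hx hz hy fz sx + termN hx hz fy fx sz ∧
      termN hz fz hx fx sx + termN hz fz hy fy sy
        = termN fy fx hy fz sx + termN fy fx hx hz sy := by
  have E1 : (hy = hx+1 ∧ hx+1 < m) ∨ (hx+1 = m ∧ hy = 0) ∨
      (hx = hy+1 ∧ hy+1 < m) ∨ (hy+1 = m ∧ hx = 0) := by
    rcases a1 with h | h
    · rcases adj_expand_s7 bhx h with h' | h'
      exacts [Or.inl h', Or.inr (Or.inl h')]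
    · rcases adj_expand_s7 bhy h with h' | h'
      exacts [Or.inr (Or.inr (Or.inl h')), Or.inr (Or.inr (Or.inr h'))]
  have E2 : (fz = fx+1 ∧ fx+1 < m) ∨ (fx+1 = m ∧ fz = 0) ∨
      (fx = fz+1 ∧ fz+1 < m) ∨ (fz+1 = m ∧ fx = 0) := by
    rcases a2 with h | h
    · rcases adj_expand_s7 bfx h with h' | h'
      exacts [Or.inl h', Or.inr (Or.inl h')]
    · rcases adj_expand_s7 bfz h with h' | h'
      exacts [Or.inr (Or.inr (Or.inl h')), Or.inr (Or.inr (Or.inr h'))]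
  have E3 : (hz = fy+1 ∧ fy+1 < m) ∨ (fy+1 = m ∧ hz = 0) ∨
      (fy = hz+1 ∧ hz+1 < m) ∨ (hz+1 = m ∧ fy = 0) := by
    rcases a3 with h | h
    · rcases adj_expand_s7 bfy h with h' | h'
      exacts [Or.inl h', Or.inr (Or.inl h')]
    · rcases adj_expand_s7 bhz h with h' | h'
      exacts [Or.inr (Or.inr (Or.inl h')), Or.inr (Or.inr (Or.inr h'))]
  have r1 := R1 bhx bfx bhy bfy bhz bfz dhxfx dhxhy dhxfy dhxhz dhxfz dfxhy dfxfy dfxhz dfxfz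
    dhyfy dhyhz dhyfz dfyhz dfyfz dhzfz E3
  have r2 := R2 bhx bfx bhy bfy bhz bfz dhxfx dhxhy dhxfy dhxhz dhxfz dfxhy dfxfy dfxhz dfxfz
    dhyfy dhyhz dhyfz dfyhz dfyfz dhzfz E2
  have r3 := R3 bhx bfx bhy bfy bhz bfz dhxfx dhxhy dhxfy dhxhz dhxfz dfxhy dfxfy dfxhz dfxfz
    dhyfy dhyhz dhyfz dfyhz dfyfz dhzfz E1
  have r4 := R4 bhx bfx bhy bfy bhz bfz dhxfx dhxhy dhxfy dhxhz dhxfz dfxhy dfxfy dfxhz dfxfz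
    dhyfy dhyhz dhyfz dfyhz dfyfz dhzfz E1
  have r6 := R6 bhx bfx bhy bfy bhz bfz dhxfx dhxhy dhxfy dhxhz dhxfz dfxhy dfxfy dfxhz dfxfz
    dhyfy dhyhz dhyfz dfyhz dfyfz dhzfz E2 E3
  have r8 := R8 bhx bfx bhy bfy bhz bfz dhxfx dhxhy dhxfy dhxhz dhxfz dfxhy dfxfy dfxhz dfxfz
    dhyfy dhyhz dhyfz dfyhz dfyfz dhzfz E3
  have r9 := R9 bhx bfx bhy bfy bhz bfz dhxfx dhxhy dhxfy dhxhz dhxfz dfxhy dfxfy dfxhz dfxfz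
    dhyfy dhyhz dhyfz dfyhz dfyfz dhzfz E1
  have r11 := R11 bhx bfx bhy bfy bhz bfz dhxfx dhxhy dhxfy dhxhz dhxfz dfxhy dfxfy dfxhz dfxfz
    dhyfy dhyhz dhyfz dfyhz dfyfz dhzfz E1 E2
  have r12 := R12 bhx bfx bhy bfy bhz bfz dhxfx dhxhy dhxfy dhxhz dhxfz dfxhy dfxfy dfxhz dfxfz
    dhyfy dhyhz dhyfz dfyhz dfyfz dhzfz E2
  have r13 := R13 bhx bfx bhy bfy bhz bfz dhxfx dhxhy dhxfy dhxhz dhxfz dfxhy dfxfy dfxhz dfxfz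
    dhyfy dhyhz dhyfz dfyhz dfyfz dhzfz E1
  have r15 := R15 bhx bfx bhy bfy bhz bfz dhxfx dhxhy dhxfy dhxhz dhxfz dfxhy dfxfy dfxhz dfxfz
    dhyfy dhyhz dhyfz dfyhz dfyfz dhzfz E3
  have r16 := R16 bhx bfx bhy bfy bhz bfz dhxfx dhxhy dhxfy dhxhz dhxfz dfxhy dfxfy dfxhz dfxfz
    dhyfy dhyhz dhyfz dfyhz dfyfz dhzfz E1 E3
  have r17 := R17 bhx bfx bhy bfy bhz bfz dhxfx dhxhy dhxfy dhxhz dhxfz dfxhy dfxfy dfxhz dfxfz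
    dhyfy dhyhz dhyfz dfyhz dfyfz dhzfz E3
  have r18 := R18 bhx bfx bhy bfy bhz bfz dhxfx dhxhy dhxfy dhxhz dhxfz dfxhy dfxfy dfxhz dfxfz
    dhyfy dhyhz dhyfz dfyhz dfyfz dhzfz E2
  have r20 := R20 bhx bfx bhy bfy bhz bfz dhxfx dhxhy dhxfy dhxhz dhxfz dfxhy dfxfy dfxhz dfxfz
    dhyfy dhyhz dhyfz dfyhz dfyfz dhzfz E2 E3
  -- chained relations
  have r5 : arc hy fy fz = !arc hx fx fy := by
    have h : arc hy fy fz = arc hy fy fx := by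
      rcases a2 with h | h
      · exact (arc_third_adj bhy bfy bfx h dfxhy.symm dhyfz dfxfy.symm dfyfz).symm
      · exact arc_third_adj bhy bfy bfz h dhyfz dfxhy.symm dfyfz dfxfy.symm
    rw [h, r4]
  have r7 : arc hz fz hy = !arc hx fx fy := by
    have h : arc hz fz hy = arc hz fz hx := by
      rcases a1 with h | h
      · exact (arc_third_adj bhz bfz bhx h dhxhz.symm dhyhz.symm dhxfz.symm dhyfz.symm).symm
      · exact arc_third_adj bhz bfz bhy h dhyhz.symm dhxhz.symm dhyfz.symm dhxfz.symm
    rw [h, r6]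
  have r10 : arc hy fz hz = arc hx fx fy := by
    have h : arc hy fz hz = arc hy fz fy := by
      rcases a3 with h | h
      · exact (arc_third_adj bhy bfz bfy h dhyfy dhyhz dfyfz.symm dhzfz.symm).symm
      · exact arc_third_adj bhy bfz bhz h dhyhz dhyfy dhzfz.symm dfyfz.symm
    rw [h, r11]
  have r14 : arc hx hz fz = !arc hx fx fy := by
    have h : arc hx hz fz = arc hx hz fx := by
      rcases a2 with h | h
      · exact (arc_third_adj bhx bhz bfx h dhxfx dhxfz dfxhz.symm dhzfz).symm
      · exact arc_third_adj bhx bhz bfz h dhxfz dhxfx dhzfz dfxhz.symm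
    rw [h, r16]
  have r19 : arc fy fx hy = !arc hx fx fy := by
    have h : arc fy fx hy = arc fy fx hx := by
      rcases a1 with h | h
      · exact (arc_third_adj bfy bfx bhx h dhxfy.symm dhyfy.symm dhxfx.symm dfxhy).symm
      · exact arc_third_adj bfy bfx bhy h dhyfy.symm dhxfy.symm dfxhy dhxfx.symm
    rw [h, r20]
  clear E1 E2 E3 a1 a2 a3
  simp only [termN, r1, r2, r3, r4, r5, r6, r7, r8, r9, r10, r11, r12, r13, r14, r15, r16,
    r17, r18, r19, r20] at adm ⊢
  clear r1 r2 r3 r4 r5 r6 r7 r8 r9 r10 r11 r12 r13 r14 r15 r16 r17 r18 r19 r20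
  clear bhx bfx bhy bfy bhz bfz dhxfx dhxhy dhxfy dhxhz dhxfz dfxhy dfxfy dfxhz dfxfz
    dhyfy dhyhz dhyfz dfyhz dfyfz dhzfz
  rcases adm with ⟨pat, h1, h2⟩ | ⟨pat, h1, h2⟩ | ⟨pat, h1, h2⟩ | ⟨pat, h1, h2⟩ <;>
    subst h1 <;> subst h2 <;>
    rcases pat with ⟨c1, c2, c3⟩ | ⟨c1, c2, c3⟩ <;>
    cases eA : arc hx fx hy <;> cases eP : arc hx fx fy <;>
    cases eB : arc hz fz fx <;> cases eC : arc hy fy hz <;>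
    simp_all <;> ring

lemma GaussDiagram.Proper.val_hh {G : GaussDiagram} (h : G.Proper) {a b : Fin G.n}
    (hab : a ≠ b) : (G.head a).1 ≠ (G.head b).1 := fun hv =>
  hab (Sum.inl_injective (h.1 (show Sum.elim G.head G.foot (.inl a) =
    Sum.elim G.head G.foot (.inl b) from Fin.val_injective hv)))

lemma GaussDiagram.Proper.val_hf {G : GaussDiagram} (h : G.Proper) (a b : Fin G.n) :
    (G.head a).1 ≠ (G.foot b).1 := fun hv => by
  have := h.1 (show Sum.elim G.head G.foot (.inl a) =
    Sum.elim G.head G.foot (.inr b) from Fin.val_injective hv)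
  simp at this

lemma GaussDiagram.Proper.val_ff {G : GaussDiagram} (h : G.Proper) {a b : Fin G.n}
    (hab : a ≠ b) : (G.foot a).1 ≠ (G.foot b).1 := fun hv =>
  hab (Sum.inr_injective (h.1 (show Sum.elim G.head G.foot (.inr a) =
    Sum.elim G.head G.foot (.inr b) from Fin.val_injective hv)))

lemma GaussDiagram.Proper.val_fh {G : GaussDiagram} (h : G.Proper) (a b : Fin G.n) :
    (G.foot a).1 ≠ (G.head b).1 := (h.val_hf b a).symm

lemma adjPos_val {m : ℕ} {u v : Fin m} (h : adjPos u v) :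
    v.1 = (u.1 + 1) % m ∨ u.1 = (v.1 + 1) % m := by
  rcases h with h | h
  · exact Or.inl (by rw [h]; rfl)
  · exact Or.inr (by rw [h]; rfl)

lemma cardA_single {G G' : GaussDiagram} (h : SingleChordMove G G') {i : ℤ} (hi : i ≠ 0) :
    G'.cardA i = G.cardA i := by
  obtain ⟨hP, hP', hn, e, φ, y, he, hey, hφ, hmap, hadj⟩ := h
  have hadjv := adjPos_val hadj
  have hnm : y ∉ Finset.image e Finset.univ := by
    simp only [Finset.mem_image]; rintro ⟨j, -, hj⟩; exact hey j hj
  have hcov : insert y (Finset.image e Finset.univ) = (Finset.univ : Finset (Fin G'.n)) := by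
    apply Finset.eq_univ_of_card
    rw [Finset.card_insert_of_notMem hnm, Finset.card_image_of_injective _ he]
    simp [hn]
  have hsum : ∀ f : Fin G'.n → ℤ, (∑ c, f c) = f y + ∑ j, f (e j) := by
    intro f
    rw [← hcov, Finset.sum_insert hnm, Finset.sum_image (fun a _ b _ hab => he hab)]
  have harc_eq : ∀ c : Fin G'.n, c ≠ y →
      arc (G'.head c).1 (G'.foot c).1 (G'.head y).1 =
        arc (G'.head c).1 (G'.foot c).1 (G'.foot y).1 := by
    intro c hc
    rcases hadjv with hv | hv
    · exact arc_third_adj (G'.head c).2 (G'.foot c).2 (G'.head y).2 hv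
        (hP'.val_hh hc) (hP'.val_hf c y) (hP'.val_fh c y) (hP'.val_ff hc)
    · exact (arc_third_adj (G'.head c).2 (G'.foot c).2 (G'.foot y).2 hv
        (hP'.val_hf c y) (hP'.val_hh hc) (hP'.val_ff hc) (hP'.val_fh c y)).symm
  have K2 : ∀ a : Fin G.n, G'.crosses (e a) y = false := fun a => by
    simp [GaussDiagram.crosses, harc_eq (e a) (hey a)]
  have K3 : G'.parity y = 0 := by
    unfold GaussDiagram.parity
    apply Finset.sum_eq_zero
    intro c _
    by_cases hc : c = y
    · simp [GaussDiagram.crosses, hc]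
    · have hcr : G'.crosses y c = false := by
        rcases hadjv with hv | hv
        · have h1 : arc (G'.head y).1 (G'.foot y).1 (G'.head c).1 = false :=
            arc_succ_false (G'.head y).2 (G'.head c).2 hv (hP'.val_hf y y)
          have h2 : arc (G'.head y).1 (G'.foot y).1 (G'.foot c).1 = false :=
            arc_succ_false (G'.head y).2 (G'.foot c).2 hv (hP'.val_hf y y)
          simp [GaussDiagram.crosses, h1, h2]
        · have h1 : arc (G'.head y).1 (G'.foot y).1 (G'.head c).1 = true :=
            arc_pred_true (G'.foot y).2 (G'.head c).2 hv (hP'.val_hh hc) (hP'.val_hf c y)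
          have h2 : arc (G'.head y).1 (G'.foot y).1 (G'.foot c).1 = true :=
            arc_pred_true (G'.foot y).2 (G'.foot c).2 hv (hP'.val_fh c y) (hP'.val_ff hc)
          simp [GaussDiagram.crosses, h1, h2]
      simp [hcr]
  have hbne : ∀ a b : Fin G.n, (e b != e a) = (b != a) := by
    intro a b
    rw [Bool.eq_iff_iff, bne_iff_ne, bne_iff_ne]
    exact ⟨fun h' hh => h' (by rw [hh]), he.ne⟩
  have hφ' : ∀ a b p : Fin (2*G.n), arc a.1 b.1 p.1 = arc (φ a).1 (φ b).1 (φ p).1 := hφ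
  have K1 : ∀ a b : Fin G.n,
      (if G'.crosses (e a) (e b) then G'.sign (e b) * G'.inter (e a) (e b) else 0) =
        (if G.crosses a b then G.sign b * G.inter a b else 0) := by
    intro a b
    have hc : G'.crosses (e a) (e b) = G.crosses a b := by
      simp only [GaussDiagram.crosses, (hmap a).1, (hmap a).2.1, (hmap b).1, (hmap b).2.1,
        ← hφ', hbne]
    have hint : G'.inter (e a) (e b) = G.inter a b := by
      simp only [GaussDiagram.inter, (hmap a).1, (hmap a).2.1, (hmap b).1, ← hφ']
    rw [hc, hint, (hmap b).2.2]
  have hpar : ∀ a : Fin G.n, G'.parity (e a) = G.parity a := by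
    intro a
    unfold GaussDiagram.parity
    rw [hsum]
    rw [K2 a]
    simp only [Bool.false_eq_true, if_false, zero_add]
    exact Finset.sum_congr rfl fun j _ => K1 a j
  unfold GaussDiagram.cardA
  rw [hsum, K3, if_neg (fun h' => hi h'.symm), zero_add]
  exact Finset.sum_congr rfl fun j _ => by rw [hpar j, (hmap j).2.2]

lemma cardA_two {G G' : GaussDiagram} (h : TwoChordMove G G') {i : ℤ} :
    G'.cardA i = G.cardA i := by
  obtain ⟨hP, hP', hn, e, φ, y₁, y₂, he, h12, hey, hφ, hmap, hadjH, hadjF, hsgn⟩ := h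
  have hadjHv := adjPos_val hadjH
  have hadjFv := adjPos_val hadjF
  have hφ' : ∀ a b p : Fin (2*G.n), arc a.1 b.1 p.1 = arc (φ a).1 (φ b).1 (φ p).1 := hφ
  -- covering of the index set
  have hnm₂ : y₂ ∉ Finset.image e Finset.univ := by
    simp only [Finset.mem_image]; rintro ⟨j, -, hj⟩; exact (hey j).2 hj
  have hnm₁ : y₁ ∉ insert y₂ (Finset.image e Finset.univ) := by
    simp only [Finset.mem_insert, Finset.mem_image]
    rintro (h' | ⟨j, -, hj⟩)
    · exact h12 h'
    · exact (hey j).1 hj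
  have hcov : insert y₁ (insert y₂ (Finset.image e Finset.univ)) =
      (Finset.univ : Finset (Fin G'.n)) := by
    apply Finset.eq_univ_of_card
    rw [Finset.card_insert_of_notMem hnm₁, Finset.card_insert_of_notMem hnm₂,
      Finset.card_image_of_injective _ he]
    simp [hn]
  have hsum : ∀ f : Fin G'.n → ℤ, (∑ c, f c) = f y₁ + (f y₂ + ∑ j, f (e j)) := by
    intro f
    rw [← hcov, Finset.sum_insert hnm₁, Finset.sum_insert hnm₂,
      Finset.sum_image (fun a _ b _ hab => he hab)]
  -- an old chord meets the two new chords identically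
  have harcH : ∀ c : Fin G'.n, c ≠ y₁ → c ≠ y₂ →
      arc (G'.head c).1 (G'.foot c).1 (G'.head y₁).1 =
        arc (G'.head c).1 (G'.foot c).1 (G'.head y₂).1 := by
    intro c hc1 hc2
    rcases hadjHv with hv | hv
    · exact arc_third_adj (G'.head c).2 (G'.foot c).2 (G'.head y₁).2 hv
        (hP'.val_hh hc1) (hP'.val_hh hc2) (hP'.val_fh c y₁) (hP'.val_fh c y₂)
    · exact (arc_third_adj (G'.head c).2 (G'.foot c).2 (G'.head y₂).2 hv
        (hP'.val_hh hc2) (hP'.val_hh hc1) (hP'.val_fh c y₂) (hP'.val_fh c y₁)).symm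
  have harcF : ∀ c : Fin G'.n, c ≠ y₁ → c ≠ y₂ →
      arc (G'.head c).1 (G'.foot c).1 (G'.foot y₁).1 =
        arc (G'.head c).1 (G'.foot c).1 (G'.foot y₂).1 := by
    intro c hc1 hc2
    rcases hadjFv with hv | hv
    · exact arc_third_adj (G'.head c).2 (G'.foot c).2 (G'.foot y₁).2 hv
        (hP'.val_hf c y₁) (hP'.val_hf c y₂) (hP'.val_ff hc1) (hP'.val_ff hc2)
    · exact (arc_third_adj (G'.head c).2 (G'.foot c).2 (G'.foot y₂).2 hv
        (hP'.val_hf c y₂) (hP'.val_hf c y₁) (hP'.val_ff hc2) (hP'.val_ff hc1)).symm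
  -- the two new chords look identical from any other position
  have harc12 : ∀ p : ℕ, p < 2 * G'.n → p ≠ (G'.head y₁).1 → p ≠ (G'.head y₂).1 →
      p ≠ (G'.foot y₁).1 → p ≠ (G'.foot y₂).1 →
      arc (G'.head y₁).1 (G'.foot y₁).1 p = arc (G'.head y₂).1 (G'.foot y₂).1 p := by
    intro p hp hph1 hph2 hpf1 hpf2
    have step1 : arc (G'.head y₁).1 (G'.foot y₁).1 p = arc (G'.head y₂).1 (G'.foot y₁).1 p := by
      rcases hadjHv with hv | hv
      · exact arc_fst_adj (G'.head y₁).2 (G'.foot y₁).2 hp hv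
          (hP'.val_fh y₁ y₁) (hP'.val_fh y₁ y₂) hph1 hph2
      · exact (arc_fst_adj (G'.head y₂).2 (G'.foot y₁).2 hp hv
          (hP'.val_fh y₁ y₂) (hP'.val_fh y₁ y₁) hph2 hph1).symm
    rw [step1]
    rcases hadjFv with hv | hv
    · exact arc_snd_adj (G'.foot y₁).2 (G'.head y₂).2 hp hv
        (hP'.val_hf y₂ y₁) (hP'.val_hf y₂ y₂) hpf1 hpf2
    · exact (arc_snd_adj (G'.foot y₂).2 (G'.head y₂).2 hp hv
        (hP'.val_hf y₂ y₂) (hP'.val_hf y₂ y₁) hpf2 hpf1).symm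
  -- cancellation of the two new terms in the parity of an old chord
  have cancel : ∀ a : Fin G.n,
      (if G'.crosses (e a) y₁ then G'.sign y₁ * G'.inter (e a) y₁ else 0) +
        (if G'.crosses (e a) y₂ then G'.sign y₂ * G'.inter (e a) y₂ else 0) = 0 := by
    intro a
    have hcr : G'.crosses (e a) y₁ = G'.crosses (e a) y₂ := by
      simp only [GaussDiagram.crosses, harcH (e a) (hey a).1 (hey a).2,
        harcF (e a) (hey a).1 (hey a).2,
        show (y₁ != e a) = true from bne_iff_ne.mpr (Ne.symm (hey a).1),
        show (y₂ != e a) = true from bne_iff_ne.mpr (Ne.symm (hey a).2)]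
    have hint : G'.inter (e a) y₁ = G'.inter (e a) y₂ := by
      simp only [GaussDiagram.inter, harcH (e a) (hey a).1 (hey a).2]
    rw [hcr, hint, hsgn]
    cases hC : G'.crosses (e a) y₂ <;> simp [hC] <;> ring
  have hbne : ∀ a b : Fin G.n, (e b != e a) = (b != a) := by
    intro a b
    rw [Bool.eq_iff_iff, bne_iff_ne, bne_iff_ne]
    exact ⟨fun h' hh => h' (by rw [hh]), he.ne⟩
  have K1 : ∀ a b : Fin G.n,
      (if G'.crosses (e a) (e b) then G'.sign (e b) * G'.inter (e a) (e b) else 0) =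
        (if G.crosses a b then G.sign b * G.inter a b else 0) := by
    intro a b
    have hc : G'.crosses (e a) (e b) = G.crosses a b := by
      simp only [GaussDiagram.crosses, (hmap a).1, (hmap a).2.1, (hmap b).1, (hmap b).2.1,
        ← hφ', hbne]
    have hint : G'.inter (e a) (e b) = G.inter a b := by
      simp only [GaussDiagram.inter, (hmap a).1, (hmap a).2.1, (hmap b).1, ← hφ']
    rw [hc, hint, (hmap b).2.2]
  have hpar : ∀ a : Fin G.n, G'.parity (e a) = G.parity a := by
    intro a
    unfold GaussDiagram.parity
    rw [hsum, ← add_assoc, cancel a, zero_add]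
    exact Finset.sum_congr rfl fun j _ => K1 a j
  -- the two new chords have equal parities
  have hpar12 : G'.parity y₁ = G'.parity y₂ := by
    unfold GaussDiagram.parity
    rw [hsum, hsum]
    have self1 : (if G'.crosses y₁ y₁ then G'.sign y₁ * G'.inter y₁ y₁ else 0) = 0 := by
      simp [GaussDiagram.crosses]
    have self2 : (if G'.crosses y₂ y₂ then G'.sign y₂ * G'.inter y₂ y₂ else 0) = 0 := by
      simp [GaussDiagram.crosses]
    have hcross : G'.crosses y₁ y₂ = G'.crosses y₂ y₁ := by
      simp only [GaussDiagram.crosses,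
        show (y₂ != y₁) = true from bne_iff_ne.mpr (Ne.symm h12),
        show (y₁ != y₂) = true from bne_iff_ne.mpr h12, Bool.true_and]
      exact cross_symmN (hP'.val_hf y₁ y₁) (hP'.val_hh h12) (hP'.val_hf y₁ y₂)
        (hP'.val_fh y₁ y₂) (hP'.val_ff h12) (hP'.val_hf y₂ y₂)
    have hmut : (if G'.crosses y₁ y₂ then G'.sign y₂ * G'.inter y₁ y₂ else 0) =
        (if G'.crosses y₂ y₁ then G'.sign y₁ * G'.inter y₂ y₁ else 0) := by
      cases hC : G'.crosses y₁ y₂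
      · have hC' := hcross.symm.trans hC
        rw [hC']; simp
      · have hC' := hcross.symm.trans hC
        have hprop : arc (G'.head y₁).1 (G'.foot y₁).1 (G'.head y₂).1 ≠
            arc (G'.head y₁).1 (G'.foot y₁).1 (G'.foot y₂).1 := by
          have := hC
          simp only [GaussDiagram.crosses, Bool.and_eq_true, bne_iff_ne] at this
          exact this.2
        have hanti := inter_antisymN (hP'.val_hf y₁ y₁) (hP'.val_hh h12)
          (hP'.val_hf y₁ y₂) (hP'.val_fh y₁ y₂) (hP'.val_ff h12) (hP'.val_hf y₂ y₂) hprop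
        have hneg : G'.inter y₂ y₁ = -G'.inter y₁ y₂ := by
          unfold GaussDiagram.inter
          rw [hanti]
          cases arc (G'.head y₁).1 (G'.foot y₁).1 (G'.head y₂).1 <;> simp
        rw [hC', if_pos rfl, if_pos rfl, hneg, hsgn]; ring
    have hrest : ∀ j : Fin G.n,
        (if G'.crosses y₁ (e j) then G'.sign (e j) * G'.inter y₁ (e j) else 0) =
          (if G'.crosses y₂ (e j) then G'.sign (e j) * G'.inter y₂ (e j) else 0) := by
      intro j
      have hd : ∀ q : Fin G'.n, q ≠ y₁ → q ≠ y₂ →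
          arc (G'.head y₁).1 (G'.foot y₁).1 (G'.head q).1 =
            arc (G'.head y₂).1 (G'.foot y₂).1 (G'.head q).1 ∧
          arc (G'.head y₁).1 (G'.foot y₁).1 (G'.foot q).1 =
            arc (G'.head y₂).1 (G'.foot y₂).1 (G'.foot q).1 := by
        intro q hq1 hq2
        constructor
        · exact harc12 (G'.head q).1 (G'.head q).2 (hP'.val_hh hq1) (hP'.val_hh hq2)
            (hP'.val_hf q y₁) (hP'.val_hf q y₂)
        · exact harc12 (G'.foot q).1 (G'.foot q).2 (hP'.val_fh q y₁) (hP'.val_fh q y₂)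
            (hP'.val_ff hq1) (hP'.val_ff hq2)
      obtain ⟨e1, e2⟩ := hd (e j) (hey j).1 (hey j).2
      have hcr : G'.crosses y₁ (e j) = G'.crosses y₂ (e j) := by
        simp only [GaussDiagram.crosses, e1, e2,
          show (e j != y₁) = true from bne_iff_ne.mpr (hey j).1,
          show (e j != y₂) = true from bne_iff_ne.mpr (hey j).2]
      have hint : G'.inter y₁ (e j) = G'.inter y₂ (e j) := by
        simp only [GaussDiagram.inter, e1]
      rw [hcr, hint]
    rw [self1, self2, hmut, zero_add, zero_add]
    congr 1
    exact Finset.sum_congr rfl fun j _ => hrest j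
  unfold GaussDiagram.cardA
  rw [hsum, ← add_assoc, hpar12, hsgn]
  have : (if G'.parity y₂ = i then -G'.sign y₂ else 0) +
      (if G'.parity y₂ = i then G'.sign y₂ else 0) = 0 := by
    by_cases hp : G'.parity y₂ = i <;> simp [hp]
  rw [this, zero_add]
  exact Finset.sum_congr rfl fun j _ => by rw [hpar j, (hmap j).2.2]

lemma termN_congr {a b p q a' b' p' q' : ℕ} (s : ℤ) (h1 : arc a b p = arc a' b' p')
    (h2 : arc a b q = arc a' b' q') : termN a b p q s = termN a' b' p' q' s := by
  unfold termN; rw [h1, h2]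

lemma cardA_triangle {G G' : GaussDiagram} (h : TriangleMove G G') {i : ℤ} :
    G'.cardA i = G.cardA i := by
  obtain ⟨hP, hP', e, φ, x, y, z, w₁, w₂, w₃, he, hφb, hφ, hTV, hsgn, hother, hslide, hadm⟩ := h
  obtain ⟨hxy, hyz, hxz, hv₁, hv₂, hv₃⟩ := hTV
  obtain ⟨⟨hexh, heyh⟩, ⟨hexf, hezf⟩, ⟨heyf, hezh⟩⟩ := hslide
  have hei := he.injective
  have hφ' : ∀ a b p : Fin (2*G.n), arc a.1 b.1 p.1 = arc (φ a).1 (φ b).1 (φ p).1 := hφ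
  have bne' : ∀ {a b : Fin G.n}, a ≠ b → (e b != e a) = true :=
    fun hab => bne_iff_ne.mpr (fun hh => hab (hei hh).symm)
  -- adjacency of the vertex pairs, on the original circle
  have a1 : (G.head y).1 = ((G.head x).1+1) % (2*G.n) ∨
      (G.head x).1 = ((G.head y).1+1) % (2*G.n) := by
    rcases hv₁ with ⟨p, q⟩ | ⟨p, q⟩
    · left; rw [p, q]; rfl
    · right; rw [p, q]; rfl
  have a2 : (G.foot z).1 = ((G.foot x).1+1) % (2*G.n) ∨
      (G.foot x).1 = ((G.foot z).1+1) % (2*G.n) := by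
    rcases hv₂ with ⟨p, q⟩ | ⟨p, q⟩
    · left; rw [p, q]; rfl
    · right; rw [p, q]; rfl
  have a3 : (G.head z).1 = ((G.foot y).1+1) % (2*G.n) ∨
      (G.foot y).1 = ((G.head z).1+1) % (2*G.n) := by
    rcases hv₃ with ⟨p, q⟩ | ⟨p, q⟩
    · left; rw [p, q]; rfl
    · right; rw [p, q]; rfl
  -- sum reindexing
  have hsum : ∀ f : Fin G'.n → ℤ, (∑ c, f c) = ∑ j, f (e j) :=
    fun f => (Fintype.sum_bijective e he _ _ (fun j => rfl)).symm
  -- third-argument movers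
  have mv1 : ∀ A B : Fin (2*G.n), A.1 ≠ (G.head x).1 → A.1 ≠ (G.head y).1 →
      B.1 ≠ (G.head x).1 → B.1 ≠ (G.head y).1 →
      arc A.1 B.1 (G.head y).1 = arc A.1 B.1 (G.head x).1 := by
    intro A B n1 n2 n3 n4
    rcases a1 with hv | hv
    · exact (arc_third_adj A.2 B.2 (G.head x).2 hv n1 n2 n3 n4).symm
    · exact arc_third_adj A.2 B.2 (G.head y).2 hv n2 n1 n4 n3
  have mv2 : ∀ A B : Fin (2*G.n), A.1 ≠ (G.foot x).1 → A.1 ≠ (G.foot z).1 →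
      B.1 ≠ (G.foot x).1 → B.1 ≠ (G.foot z).1 →
      arc A.1 B.1 (G.foot z).1 = arc A.1 B.1 (G.foot x).1 := by
    intro A B n1 n2 n3 n4
    rcases a2 with hv | hv
    · exact (arc_third_adj A.2 B.2 (G.foot x).2 hv n1 n2 n3 n4).symm
    · exact arc_third_adj A.2 B.2 (G.foot z).2 hv n2 n1 n4 n3
  have mv3 : ∀ A B : Fin (2*G.n), A.1 ≠ (G.foot y).1 → A.1 ≠ (G.head z).1 →
      B.1 ≠ (G.foot y).1 → B.1 ≠ (G.head z).1 →
      arc A.1 B.1 (G.head z).1 = arc A.1 B.1 (G.foot y).1 := by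
    intro A B n1 n2 n3 n4
    rcases a3 with hv | hv
    · exact (arc_third_adj A.2 B.2 (G.foot y).2 hv n1 n2 n3 n4).symm
    · exact arc_third_adj A.2 B.2 (G.head z).2 hv n2 n1 n4 n3
  -- first/second argument movers
  have mvX : ∀ q : Fin (2*G.n), q.1 ≠ (G.head x).1 → q.1 ≠ (G.head y).1 →
      q.1 ≠ (G.foot x).1 → q.1 ≠ (G.foot z).1 →
      arc (G.head y).1 (G.foot z).1 q.1 = arc (G.head x).1 (G.foot x).1 q.1 := by
    intro q n1 n2 n3 n4
    have s1 : arc (G.head y).1 (G.foot z).1 q.1 = arc (G.head x).1 (G.foot z).1 q.1 := by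
      rcases a1 with hv | hv
      · exact (arc_fst_adj (G.head x).2 (G.foot z).2 q.2 hv (hP.val_fh z x) (hP.val_fh z y)
          n1 n2).symm
      · exact arc_fst_adj (G.head y).2 (G.foot z).2 q.2 hv (hP.val_fh z y) (hP.val_fh z x) n2 n1
    rw [s1]
    rcases a2 with hv | hv
    · exact (arc_snd_adj (G.foot x).2 (G.head x).2 q.2 hv (hP.val_hf x x) (hP.val_hf x z)
        n3 n4).symm
    · exact arc_snd_adj (G.foot z).2 (G.head x).2 q.2 hv (hP.val_hf x z) (hP.val_hf x x) n4 n3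
  have mvY : ∀ q : Fin (2*G.n), q.1 ≠ (G.head x).1 → q.1 ≠ (G.head y).1 →
      q.1 ≠ (G.foot y).1 → q.1 ≠ (G.head z).1 →
      arc (G.head x).1 (G.head z).1 q.1 = arc (G.head y).1 (G.foot y).1 q.1 := by
    intro q n1 n2 n3 n4
    have s1 : arc (G.head x).1 (G.head z).1 q.1 = arc (G.head y).1 (G.head z).1 q.1 := by
      rcases a1 with hv | hv
      · exact arc_fst_adj (G.head x).2 (G.head z).2 q.2 hv (hP.val_hh (Ne.symm hxz))
          (hP.val_hh (Ne.symm hyz)) n1 n2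
      · exact (arc_fst_adj (G.head y).2 (G.head z).2 q.2 hv (hP.val_hh (Ne.symm hyz))
          (hP.val_hh (Ne.symm hxz)) n2 n1).symm
    rw [s1]
    rcases a3 with hv | hv
    · exact (arc_snd_adj (G.foot y).2 (G.head y).2 q.2 hv (hP.val_hf y y)
        (hP.val_hh hyz) n3 n4).symm
    · exact arc_snd_adj (G.head z).2 (G.head y).2 q.2 hv (hP.val_hh hyz) (hP.val_hf y y) n4 n3
  have mvZ : ∀ q : Fin (2*G.n), q.1 ≠ (G.foot y).1 → q.1 ≠ (G.head z).1 →
      q.1 ≠ (G.foot x).1 → q.1 ≠ (G.foot z).1 →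
      arc (G.foot y).1 (G.foot x).1 q.1 = arc (G.head z).1 (G.foot z).1 q.1 := by
    intro q n1 n2 n3 n4
    have s1 : arc (G.foot y).1 (G.foot x).1 q.1 = arc (G.head z).1 (G.foot x).1 q.1 := by
      rcases a3 with hv | hv
      · exact arc_fst_adj (G.foot y).2 (G.foot x).2 q.2 hv (hP.val_ff hxy)
          (hP.val_fh x z) n1 n2
      · exact (arc_fst_adj (G.head z).2 (G.foot x).2 q.2 hv (hP.val_fh x z)
          (hP.val_ff hxy) n2 n1).symm
    rw [s1]
    rcases a2 with hv | hv
    · exact arc_snd_adj (G.foot x).2 (G.head z).2 q.2 hv (hP.val_hf z x) (hP.val_hf z z) n3 n4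
    · exact (arc_snd_adj (G.foot z).2 (G.head z).2 q.2 hv (hP.val_hf z z)
        (hP.val_hf z x) n4 n3).symm
  -- glue lemmas between parity terms and termN
  have glue' : ∀ (a b : Fin G.n) (Ha Fa Hb Fb : Fin (2*G.n)), b ≠ a →
      G'.head (e a) = φ Ha → G'.foot (e a) = φ Fa → G'.head (e b) = φ Hb →
      G'.foot (e b) = φ Fb →
      (if G'.crosses (e a) (e b) then G'.sign (e b) * G'.inter (e a) (e b) else 0)
        = termN Ha.1 Fa.1 Hb.1 Fb.1 (G.sign b) := by
    intro a b Ha Fa Hb Fb hba h1 h2 h3 h4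
    simp only [GaussDiagram.crosses, GaussDiagram.inter, termN, h1, h2, h3, h4, ← hφ',
      hsgn b, bne' (Ne.symm hba), Bool.true_and]
  have glue : ∀ (a b : Fin G.n), b ≠ a →
      (if G.crosses a b then G.sign b * G.inter a b else 0)
        = termN (G.head a).1 (G.foot a).1 (G.head b).1 (G.foot b).1 (G.sign b) := by
    intro a b hba
    simp only [GaussDiagram.crosses, GaussDiagram.inter, termN,
      show (b != a) = true from bne_iff_ne.mpr hba, Bool.true_and]
  -- the crossing equalities needed to transfer AdmissibleSigns
  have cxyG : G.crosses x y =
      (arc (G.head x).1 (G.foot x).1 (G.head y).1 != arc (G.head x).1 (G.foot x).1 (G.foot y).1) := by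
    simp only [GaussDiagram.crosses, Bool.true_and,
      show (y != x) = true from bne_iff_ne.mpr (Ne.symm hxy)]
  have cyzG : G.crosses y z =
      (arc (G.head y).1 (G.foot y).1 (G.head z).1 != arc (G.head y).1 (G.foot y).1 (G.foot z).1) := by
    simp only [GaussDiagram.crosses, Bool.true_and,
      show (z != y) = true from bne_iff_ne.mpr (Ne.symm hyz)]
  have cxzG : G.crosses x z =
      (arc (G.head x).1 (G.foot x).1 (G.head z).1 != arc (G.head x).1 (G.foot x).1 (G.foot z).1) := by
    simp only [GaussDiagram.crosses, Bool.true_and,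
      show (z != x) = true from bne_iff_ne.mpr (Ne.symm hxz)]
  have cxyG' : G'.crosses (e x) (e y) =
      (arc (G.head y).1 (G.foot z).1 (G.head x).1 != arc (G.head y).1 (G.foot z).1 (G.head z).1) := by
    simp only [GaussDiagram.crosses, hexh, hexf, heyh, heyf, ← hφ', bne' hxy, Bool.true_and]
  have cyzG' : G'.crosses (e y) (e z) =
      (arc (G.head x).1 (G.head z).1 (G.foot y).1 != arc (G.head x).1 (G.head z).1 (G.foot x).1) := by
    simp only [GaussDiagram.crosses, heyh, heyf, hezh, hezf, ← hφ', bne' hyz, Bool.true_and]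
  have cxzG' : G'.crosses (e x) (e z) =
      (arc (G.head y).1 (G.foot z).1 (G.foot y).1 != arc (G.head y).1 (G.foot z).1 (G.foot x).1) := by
    simp only [GaussDiagram.crosses, hexh, hexf, hezh, hezf, ← hφ', bne' hxz, Bool.true_and]
  unfold AdmissibleSigns at hadm
  rw [cxyG, cyzG, cxzG, cxyG', cyzG', cxzG'] at hadm
  have core := tri_core (G.head x).2 (G.foot x).2 (G.head y).2 (G.foot y).2 (G.head z).2
    (G.foot z).2 (hP.val_hf x x) (hP.val_hh hxy) (hP.val_hf x y) (hP.val_hh hxz)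
    (hP.val_hf x z) (hP.val_fh x y) (hP.val_ff hxy) (hP.val_fh x z) (hP.val_ff hxz)
    (hP.val_hf y y) (hP.val_hh hyz) (hP.val_hf y z) (hP.val_fh y z) (hP.val_ff hyz)
    (hP.val_hf z z) a1 a2 a3 (G.sign x) (G.sign y) (G.sign z) hadm
  -- splitting off two elements of a sum
  have split : ∀ (u v : Fin G.n), u ≠ v → ∀ f : Fin G.n → ℤ,
      (∑ b, f b) = (∑ b ∈ (Finset.univ.erase u).erase v, f b) + f v + f u := by
    intro u v huv f
    rw [Finset.sum_erase_add _ _ (Finset.mem_erase.mpr ⟨Ne.symm huv, Finset.mem_univ v⟩),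
      Finset.sum_erase_add _ _ (Finset.mem_univ u)]
  -- parity preservation
  have hpar : ∀ a : Fin G.n, G'.parity (e a) = G.parity a := by
    intro a
    unfold GaussDiagram.parity
    rw [hsum]
    by_cases hax : a = x
    · rw [hax]
      rw [split y z hyz, split y z hyz]
      have hrest : ∀ b ∈ (Finset.univ.erase y).erase z,
          (if G'.crosses (e x) (e b) then G'.sign (e b) * G'.inter (e x) (e b) else 0)
            = (if G.crosses x b then G.sign b * G.inter x b else 0) := by
        intro b hb
        have hbz : b ≠ z := (Finset.mem_erase.mp hb).1
        have hby : b ≠ y := (Finset.mem_erase.mp (Finset.mem_erase.mp hb).2).1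
        by_cases hba : b = x
        · simp [GaussDiagram.crosses, hba]
        · obtain ⟨hbh, hbf⟩ := hother b hba hby hbz
          rw [glue' x b _ _ _ _ hba hexh hexf hbh hbf, glue x b hba]
          exact termN_congr _
            (mvX (G.head b) (hP.val_hh hba) (hP.val_hh hby) (hP.val_hf b x) (hP.val_hf b z))
            (mvX (G.foot b) (hP.val_fh b x) (hP.val_fh b y) (hP.val_ff hba) (hP.val_ff hbz))
      rw [Finset.sum_congr rfl hrest,
        glue' x z _ _ _ _ (Ne.symm hxz) hexh hexf hezh hezf,
        glue' x y _ _ _ _ (Ne.symm hxy) hexh hexf heyh heyf,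
        glue x z (Ne.symm hxz), glue x y (Ne.symm hxy)]
      linarith [core.1]
    by_cases hay : a = y
    · rw [hay]
      rw [split x z hxz, split x z hxz]
      have hrest : ∀ b ∈ (Finset.univ.erase x).erase z,
          (if G'.crosses (e y) (e b) then G'.sign (e b) * G'.inter (e y) (e b) else 0)
            = (if G.crosses y b then G.sign b * G.inter y b else 0) := by
        intro b hb
        have hbz : b ≠ z := (Finset.mem_erase.mp hb).1
        have hbx : b ≠ x := (Finset.mem_erase.mp (Finset.mem_erase.mp hb).2).1
        by_cases hba : b = y
        · simp [GaussDiagram.crosses, hba]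
        · obtain ⟨hbh, hbf⟩ := hother b hbx hba hbz
          rw [glue' y b _ _ _ _ hba heyh heyf hbh hbf, glue y b hba]
          exact termN_congr _
            (mvY (G.head b) (hP.val_hh hbx) (hP.val_hh hba) (hP.val_hf b y) (hP.val_hh hbz))
            (mvY (G.foot b) (hP.val_fh b x) (hP.val_fh b y) (hP.val_ff hba) (hP.val_fh b z))
      rw [Finset.sum_congr rfl hrest,
        glue' y z _ _ _ _ (Ne.symm hyz) heyh heyf hezh hezf,
        glue' y x _ _ _ _ hxy heyh heyf hexh hexf,
        glue y z (Ne.symm hyz), glue y x hxy]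
      linarith [core.2.1]
    by_cases haz : a = z
    · rw [haz]
      rw [split x y hxy, split x y hxy]
      have hrest : ∀ b ∈ (Finset.univ.erase x).erase y,
          (if G'.crosses (e z) (e b) then G'.sign (e b) * G'.inter (e z) (e b) else 0)
            = (if G.crosses z b then G.sign b * G.inter z b else 0) := by
        intro b hb
        have hby : b ≠ y := (Finset.mem_erase.mp hb).1
        have hbx : b ≠ x := (Finset.mem_erase.mp (Finset.mem_erase.mp hb).2).1
        by_cases hba : b = z
        · simp [GaussDiagram.crosses, hba]
        · obtain ⟨hbh, hbf⟩ := hother b hbx hby hba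
          rw [glue' z b _ _ _ _ hba hezh hezf hbh hbf, glue z b hba]
          exact termN_congr _
            (mvZ (G.head b) (hP.val_hf b y) (hP.val_hh hba) (hP.val_hf b x) (hP.val_hf b z))
            (mvZ (G.foot b) (hP.val_ff hby) (hP.val_fh b z) (hP.val_ff hbx) (hP.val_ff hba))
      rw [Finset.sum_congr rfl hrest,
        glue' z y _ _ _ _ hyz hezh hezf heyh heyf,
        glue' z x _ _ _ _ hxz hezh hezf hexh hexf,
        glue z y hyz, glue z x hxz]
      linarith [core.2.2]
    · -- a is none of the triangle chords
      apply Finset.sum_congr rfl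
      intro b _
      by_cases hba : b = a
      · simp [GaussDiagram.crosses, hba]
      · obtain ⟨hah, haf⟩ := hother a hax hay haz
        by_cases hbx : b = x
        · rw [hbx]
          rw [hbx] at hba
          rw [glue' a x _ _ _ _ hba hah haf hexh hexf, glue a x hba]
          exact termN_congr _
            (mv1 (G.head a) (G.foot a) (hP.val_hh hax) (hP.val_hh hay) (hP.val_fh a x)
              (hP.val_fh a y))
            (mv2 (G.head a) (G.foot a) (hP.val_hf a x) (hP.val_hf a z) (hP.val_ff hax)
              (hP.val_ff haz))
        by_cases hby : b = y
        · rw [hby]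
          rw [hby] at hba
          rw [glue' a y _ _ _ _ hba hah haf heyh heyf, glue a y hba]
          refine termN_congr _ ?_ ?_
          · exact (mv1 (G.head a) (G.foot a) (hP.val_hh hax) (hP.val_hh hay) (hP.val_fh a x)
              (hP.val_fh a y)).symm
          · exact mv3 (G.head a) (G.foot a) (hP.val_hf a y) (hP.val_hh haz) (hP.val_ff hay)
              (hP.val_fh a z)
        by_cases hbz : b = z
        · rw [hbz]
          rw [hbz] at hba
          rw [glue' a z _ _ _ _ hba hah haf hezh hezf, glue a z hba]
          refine termN_congr _ ?_ ?_
          · exact (mv3 (G.head a) (G.foot a) (hP.val_hf a y) (hP.val_hh haz) (hP.val_ff hay)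
              (hP.val_fh a z)).symm
          · exact (mv2 (G.head a) (G.foot a) (hP.val_hf a x) (hP.val_hf a z) (hP.val_ff hax)
              (hP.val_ff haz)).symm
        · obtain ⟨hbh, hbf⟩ := hother b hbx hby hbz
          rw [glue' a b _ _ _ _ hba hah haf hbh hbf, glue a b hba]
  unfold GaussDiagram.cardA
  rw [hsum]
  exact Finset.sum_congr rfl fun j _ => by rw [hpar j, hsgn j]

/-- For `i ≠ 0` the signed cardinality `|A_i|` is unchanged by a single
chord move, a two chord move or a triangle move — hence by any finite sequence of chord
moves. -/
theorem cardA_invariant (i : ℤ) (hi : i ≠ 0) (G G' : GaussDiagram)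
    (h : Relation.ReflTransGen GaussMove G G') :
    G.cardA i = G'.cardA i := by
  induction h with
  | refl => rfl
  | tail _ hm ih =>
    rw [ih]
    rcases hm with h | h | h | h | h | h
    · exact (cardA_single h hi).symm
    · exact cardA_single h hi
    · exact (cardA_two h).symm
    · exact cardA_two h
    · exact (cardA_triangle h).symm
    · exact cardA_triangle h
end
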